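/- arXiv:1511.07156 — 9 statements merged into one kernel-verified Lean document; each statement's English description precedes it below -/
import Mathlib

section
/- Let q>1. The derivative ψ_q' of the q-digamma function is strictly completely monotonic on (0,∞). -/
/-- The q-digamma function for `q > 1`:
`ψ_q(x) = -ln(q-1) + ln q * (x - 1/2 - ∑_{k=1}^∞ q^{-kx}/(1-q^{-kx}))`. -/
noncomputable def qDigammaGT (q x : ℝ) : ℝ :=
  -Real.log (q - 1) + Real.log q *
    (x - 1 / 2 - ∑' k : ℕ, q ^ (-(((k : ℝ) + 1) * x)) / (1 - q ^ (-(((k : ℝ) + 1) * x))))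

/-- `f` is strictly completely monotonic on `s`: it has derivatives of all orders on `s`
and `(-1)^n f^(n)(x) > 0` for all `x ∈ s` and all `n ≥ 0`. -/
def StrictCompletelyMonotonicOn (f : ℝ → ℝ) (s : Set ℝ) : Prop :=
  ContDiffOn ℝ (⊤ : ℕ∞) f s ∧ ∀ n : ℕ, ∀ x ∈ s, 0 < (-1 : ℝ) ^ n * iteratedDeriv n f x

open Real Set Filter Topology

namespace QDigammaAux

/-- Exponential rate `(k+1)(m+1) log q`. -/
noncomputable def cc (q : ℝ) (p : ℕ × ℕ) : ℝ :=
  ((p.1 : ℝ) + 1) * ((p.2 : ℝ) + 1) * Real.log q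

/-- `GG q n x = ∑ (cc p)^n e^{-cc p · x}`. -/
noncomputable def GG (q : ℝ) (n : ℕ) (x : ℝ) : ℝ :=
  ∑' p : ℕ × ℕ, (cc q p) ^ n * Real.exp (-(cc q p * x))

/-- Complex extension of `GG q 1`. -/
noncomputable def PhiC (q : ℝ) (z : ℂ) : ℂ :=
  ∑' p : ℕ × ℕ, (cc q p : ℂ) * Complex.exp (-((cc q p : ℂ) * z))

variable {q : ℝ}

lemma cc_pos (hq : 1 < q) (p : ℕ × ℕ) : 0 < cc q p := by
  have h := Real.log_pos hq
  unfold cc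
  positivity

lemma summable_exp (hq : 1 < q) {s : ℝ} (hs : 0 < s) :
    Summable (fun p : ℕ × ℕ => Real.exp (-(cc q p * s))) := by
  have hL : 0 < Real.log q := Real.log_pos hq
  set r : ℝ := Real.exp (-(Real.log q * s)) with hr
  have hr0 : 0 ≤ r := (Real.exp_pos _).le
  have hr1 : r < 1 := by
    rw [hr]
    apply Real.exp_lt_one_iff.mpr
    nlinarith
  have hgeo : Summable (fun m : ℕ => r ^ m) := summable_geometric_of_lt_one hr0 hr1
  have hf : Summable (fun k : ℕ => r ^ (k + 1)) := by
    simpa [pow_succ] using hgeo.mul_right r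
  have hprod : Summable (fun p : ℕ × ℕ => r ^ (p.1 + 1) * r ^ p.2) :=
    hf.mul_of_nonneg hgeo (fun k => pow_nonneg hr0 _) (fun m => pow_nonneg hr0 _)
  apply Summable.of_nonneg_of_le (fun p => (Real.exp_pos _).le) _ hprod
  rintro ⟨k, m⟩
  have h1 : (r : ℝ) ^ (k + 1) * r ^ m = Real.exp (-((((k : ℝ) + 1) + m) * (Real.log q * s))) := by
    rw [hr, ← Real.exp_nat_mul, ← Real.exp_nat_mul, ← Real.exp_add]
    push_cast
    ring_nf
  rw [h1]
  apply Real.exp_le_exp.mpr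
  have hkm : (((k : ℝ) + 1) + m) ≤ ((k : ℝ) + 1) * ((m : ℝ) + 1) := by
    have hk0 : (0 : ℝ) ≤ k := Nat.cast_nonneg k
    have hm0 : (0 : ℝ) ≤ m := Nat.cast_nonneg m
    nlinarith
  have hcs : cc q (k, m) * s = (((k : ℝ) + 1) * ((m : ℝ) + 1)) * (Real.log q * s) := by
    unfold cc; ring
  rw [hcs]
  have hLs : 0 < Real.log q * s := mul_pos hL hs
  nlinarith

lemma summable_main (hq : 1 < q) (n : ℕ) {x : ℝ} (hx : 0 < x) :
    Summable (fun p : ℕ × ℕ => (cc q p) ^ n * Real.exp (-(cc q p * x))) := by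
  have hx2 : 0 < x / 2 := by linarith
  have hbase := (summable_exp hq hx2).mul_left ((n.factorial : ℝ) * (2 / x) ^ n)
  apply Summable.of_nonneg_of_le _ _ hbase
  · intro p
    have := cc_pos hq p
    positivity
  · intro p
    set t := cc q p with ht
    have htpos : 0 < t := cc_pos hq p
    have h1 : (t * (x / 2)) ^ n / n.factorial ≤ Real.exp (t * (x / 2)) :=
      Real.pow_div_factorial_le_exp (x := t * (x / 2)) (by positivity) n
    have h2 : t ^ n ≤ (n.factorial : ℝ) * (2 / x) ^ n * Real.exp (t * (x / 2)) := by
      have hfac : (0 : ℝ) < n.factorial := by positivity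
      rw [mul_pow, div_le_iff₀ hfac] at h1
      have hxn : (0 : ℝ) < (x / 2) ^ n := by positivity
      have h3 : t ^ n ≤ Real.exp (t * (x / 2)) * n.factorial / (x / 2) ^ n := by
        rw [le_div_iff₀ hxn]
        nlinarith
      calc t ^ n ≤ Real.exp (t * (x / 2)) * n.factorial / (x / 2) ^ n := h3
        _ = (n.factorial : ℝ) * (2 / x) ^ n * Real.exp (t * (x / 2)) := by
            have hx0 : x ≠ 0 := ne_of_gt hx
            rw [show (2 / x) ^ n = ((x / 2) ^ n)⁻¹ by rw [← inv_pow, inv_div]]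
            ring
    have hexp : Real.exp (t * (x / 2)) * Real.exp (-(t * x)) = Real.exp (-(t * (x / 2))) := by
      rw [← Real.exp_add]; ring_nf
    calc t ^ n * Real.exp (-(t * x))
        ≤ (n.factorial : ℝ) * (2 / x) ^ n * Real.exp (t * (x / 2)) * Real.exp (-(t * x)) := by
          apply mul_le_mul_of_nonneg_right h2 (Real.exp_pos _).le
      _ = (n.factorial : ℝ) * (2 / x) ^ n * Real.exp (-(t * (x / 2))) := by
          rw [mul_assoc, hexp]

lemma hasDerivAt_GG (hq : 1 < q) (n : ℕ) {x : ℝ} (hx : 0 < x) :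
    HasDerivAt (GG q n) (-(GG q (n + 1) x)) x := by
  have hx2 : 0 < x / 2 := by linarith
  have key : HasDerivAt (fun z => ∑' p : ℕ × ℕ, (cc q p) ^ n * Real.exp (-(cc q p * z)))
      (∑' p : ℕ × ℕ, -((cc q p) ^ (n + 1) * Real.exp (-(cc q p * x)))) x := by
    apply hasDerivAt_tsum_of_isPreconnected (t := Set.Ioi (x / 2))
      (summable_main hq (n + 1) hx2) isOpen_Ioi (isPreconnected_Ioi)
      (g := fun p y => (cc q p) ^ n * Real.exp (-(cc q p * y)))
      (g' := fun p y => -((cc q p) ^ (n + 1) * Real.exp (-(cc q p * y))))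
      (y₀ := x) (hy₀ := by simp only [Set.mem_Ioi]; linarith) (hy := by
        simp only [Set.mem_Ioi]; linarith)
    · intro p y _
      have h1 : HasDerivAt (fun y : ℝ => -(cc q p * y)) (-(cc q p)) y := by
        simpa using ((hasDerivAt_id y).const_mul (cc q p)).fun_neg
      have h2 := (Real.hasDerivAt_exp (-(cc q p * y))).comp y h1
      have h3 := h2.const_mul ((cc q p) ^ n)
      exact h3.congr_deriv (by beta_reduce; ring)
    · intro p y hy
      have hcp := cc_pos hq p
      have hnorm : ‖-((cc q p) ^ (n + 1) * Real.exp (-(cc q p * y)))‖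
          = (cc q p) ^ (n + 1) * Real.exp (-(cc q p * y)) := by
        rw [norm_neg, Real.norm_eq_abs, abs_of_nonneg (by positivity)]
      rw [hnorm]
      apply mul_le_mul_of_nonneg_left _ (by positivity)
      apply Real.exp_le_exp.mpr
      have hyy : x / 2 < y := hy
      nlinarith
    · exact summable_main hq n hx
  have hneg : (∑' p : ℕ × ℕ, -((cc q p) ^ (n + 1) * Real.exp (-(cc q p * x))))
      = -(GG q (n + 1) x) := by
    rw [tsum_neg]; rfl
  rw [hneg] at key
  exact key

lemma GG_pos (hq : 1 < q) (n : ℕ) {x : ℝ} (hx : 0 < x) : 0 < GG q n x := by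
  refine Summable.tsum_pos (summable_main hq n hx) (fun p => ?_) (0, 0) ?_
  · have := cc_pos hq p
    positivity
  · have := cc_pos hq ((0, 0) : ℕ × ℕ)
    positivity

lemma qdg_eq (hq : 1 < q) {x : ℝ} (hx : 0 < x) :
    qDigammaGT q x = -Real.log (q - 1) + Real.log q * (x - 1 / 2 - GG q 0 x) := by
  have hq0 : (0 : ℝ) < q := lt_trans zero_lt_one hq
  have hL : 0 < Real.log q := Real.log_pos hq
  have hstep : ∀ k : ℕ,
      q ^ (-(((k : ℝ) + 1) * x)) / (1 - q ^ (-(((k : ℝ) + 1) * x)))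
        = ∑' m : ℕ, Real.exp (-(cc q (k, m) * x)) := by
    intro k
    have hterm : q ^ (-(((k : ℝ) + 1) * x)) = Real.exp (-(((k : ℝ) + 1) * x * Real.log q)) := by
      rw [Real.rpow_def_of_pos hq0]
      ring_nf
    set r : ℝ := Real.exp (-(((k : ℝ) + 1) * x * Real.log q)) with hrdef
    have hr0 : 0 ≤ r := (Real.exp_pos _).le
    have hr1 : r < 1 := by
      rw [hrdef]
      apply Real.exp_lt_one_iff.mpr
      have h2 : (0 : ℝ) < ((k : ℝ) + 1) * x * Real.log q := by positivity
      linarith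
    have hsum : ∑' m : ℕ, r * r ^ m = r * (1 - r)⁻¹ := by
      rw [tsum_mul_left, tsum_geometric_of_lt_one hr0 hr1]
    have hrm : ∀ m : ℕ, Real.exp (-(cc q (k, m) * x)) = r * r ^ m := by
      intro m
      rw [hrdef, ← Real.exp_nat_mul, ← Real.exp_add]
      congr 1
      unfold cc
      push_cast
      ring
    rw [hterm, div_eq_mul_inv, ← hsum]
    exact (tsum_congr hrm).symm
  have hsum0 : Summable (fun p : ℕ × ℕ => Real.exp (-(cc q p * x))) := by
    simpa using summable_main hq 0 hx
  have hGG0 : GG q 0 x = ∑' k : ℕ, ∑' m : ℕ, Real.exp (-(cc q (k, m) * x)) := by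
    unfold GG
    simp only [pow_zero, one_mul]
    exact Summable.tsum_prod hsum0
  unfold qDigammaGT
  rw [hGG0, tsum_congr hstep]

lemma hasDerivAt_qdg (hq : 1 < q) {x : ℝ} (hx : 0 < x) :
    HasDerivAt (qDigammaGT q) (Real.log q + Real.log q * GG q 1 x) x := by
  have hF : HasDerivAt
      (fun y => -Real.log (q - 1) + Real.log q * (y - 1 / 2 - GG q 0 y))
      (Real.log q * (1 - -(GG q 1 x))) x := by
    have h1 : HasDerivAt (fun y : ℝ => y - 1 / 2 - GG q 0 y) (1 - -(GG q 1 x)) x :=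
      ((hasDerivAt_id x).sub_const (1 / 2)).sub (hasDerivAt_GG hq 0 hx)
    exact (h1.const_mul (Real.log q)).const_add _
  have heq : qDigammaGT q =ᶠ[𝓝 x]
      fun y => -Real.log (q - 1) + Real.log q * (y - 1 / 2 - GG q 0 y) := by
    filter_upwards [isOpen_Ioi.mem_nhds (show x ∈ Ioi 0 from hx)] with y hy
    exact qdg_eq hq hy
  have h2 := hF.congr_of_eventuallyEq heq
  exact h2.congr_deriv (by ring)

/-- Explicit formula for the iterated derivatives. -/
noncomputable def DD (q : ℝ) (n : ℕ) (x : ℝ) : ℝ :=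
  (if n = 0 then Real.log q else 0) + (-1) ^ n * Real.log q * GG q (n + 1) x

lemma iter_eq (hq : 1 < q) (n : ℕ) :
    Set.EqOn (iteratedDeriv n (deriv (qDigammaGT q))) (DD q n) (Set.Ioi 0) := by
  induction n with
  | zero =>
    intro x hx
    rw [iteratedDeriv_zero, (hasDerivAt_qdg hq hx).deriv]
    simp [DD]
  | succ n ih =>
    intro x hx
    rw [iteratedDeriv_succ]
    have heq : iteratedDeriv n (deriv (qDigammaGT q)) =ᶠ[𝓝 x] DD q n := by
      filter_upwards [isOpen_Ioi.mem_nhds hx] with y hy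
      exact ih hy
    rw [heq.deriv_eq]
    have hD : HasDerivAt (DD q n) ((-1) ^ n * Real.log q * -(GG q (n + 2) x)) x :=
      ((hasDerivAt_GG hq (n + 1) hx).const_mul ((-1) ^ n * Real.log q)).const_add _
    rw [hD.deriv]
    simp only [DD, Nat.succ_ne_zero, if_false, pow_succ]
    ring

/-- Analyticity of `PhiC` on right half-planes. -/
lemma diffOn_PhiC (hq : 1 < q) {ε : ℝ} (hε : 0 < ε) :
    DifferentiableOn ℂ (PhiC q) {z : ℂ | ε < z.re} := by
  have hopen : IsOpen {z : ℂ | ε < z.re} := isOpen_Ioi.preimage Complex.continuous_re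
  have hconn : IsPreconnected {z : ℂ | ε < z.re} := (convex_halfSpace_re_gt ε).isPreconnected
  intro z hz
  have key : HasDerivAt (fun w => ∑' p : ℕ × ℕ, (cc q p : ℂ) * Complex.exp (-((cc q p : ℂ) * w)))
      (∑' p : ℕ × ℕ, -((cc q p : ℂ) ^ 2 * Complex.exp (-((cc q p : ℂ) * z)))) z := by
    apply hasDerivAt_tsum_of_isPreconnected
      (u := fun p : ℕ × ℕ => (cc q p) ^ 2 * Real.exp (-(cc q p * ε)))
      ((summable_main hq 2 hε))
      hopen hconn
      (g := fun p w => (cc q p : ℂ) * Complex.exp (-((cc q p : ℂ) * w)))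
      (g' := fun p w => -((cc q p : ℂ) ^ 2 * Complex.exp (-((cc q p : ℂ) * w))))
      (y₀ := ((2 * ε : ℝ) : ℂ))
      (hy₀ := by simp [Complex.ofReal_re]; linarith)
      (hy := hz)
    · intro p w _
      have h1 : HasDerivAt (fun w : ℂ => -((cc q p : ℂ) * w)) (-(cc q p : ℂ)) w := by
        simpa using ((hasDerivAt_id w).const_mul (cc q p : ℂ)).fun_neg
      have h2 := (Complex.hasDerivAt_exp (-((cc q p : ℂ) * w))).comp w h1
      have h3 := h2.const_mul (cc q p : ℂ)
      exact h3.congr_deriv (by beta_reduce; ring)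
    · intro p w hw
      have hcp := cc_pos hq p
      have hre : (-((cc q p : ℂ) * w)).re = -(cc q p * w.re) := by
        simp [Complex.mul_re]
      have hnorm : ‖-((cc q p : ℂ) ^ 2 * Complex.exp (-((cc q p : ℂ) * w)))‖
          = (cc q p) ^ 2 * Real.exp (-(cc q p * w.re)) := by
        rw [norm_neg, norm_mul, norm_pow, Complex.norm_exp, hre,
          Complex.norm_real, Real.norm_eq_abs, abs_of_pos hcp]
      rw [hnorm]
      apply mul_le_mul_of_nonneg_left _ (by positivity)
      apply Real.exp_le_exp.mpr
      have hw' : ε < w.re := hw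
      nlinarith
    · -- summability at y₀ = 2ε
      have h2ε : (0 : ℝ) < 2 * ε := by linarith
      have hs := summable_main hq 1 h2ε
      have := (Complex.summable_ofReal (f := fun p : ℕ × ℕ =>
        (cc q p) ^ 1 * Real.exp (-(cc q p * (2 * ε))))).mpr hs
      apply this.congr
      intro p
      push_cast [Complex.ofReal_exp]
      ring_nf
  exact (key.differentiableAt).differentiableWithinAt

lemma PhiC_real (hq : 1 < q) (x : ℝ) : PhiC q (x : ℂ) = ((GG q 1 x : ℝ) : ℂ) := by
  unfold PhiC GG
  rw [Complex.ofReal_tsum]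
  apply tsum_congr
  intro p
  push_cast [Complex.ofReal_exp]
  ring_nf

lemma analyticOnNhd_deriv_qdg (hq : 1 < q) :
    AnalyticOnNhd ℝ (deriv (qDigammaGT q)) (Set.Ioi 0) := by
  intro x hx
  have hx0 : (0 : ℝ) < x := hx
  have hε : (0 : ℝ) < x / 2 := by linarith
  -- the real function y ↦ (PhiC q y).re is analytic on Ioi (x/2)
  have hPhi : AnalyticOnNhd ℂ (PhiC q) {z : ℂ | x / 2 < z.re} :=
    (diffOn_PhiC hq hε).analyticOnNhd (isOpen_Ioi.preimage Complex.continuous_re)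
  have hPhiR : AnalyticOnNhd ℝ (PhiC q) {z : ℂ | x / 2 < z.re} := hPhi.restrictScalars
  have hofReal : AnalyticOnNhd ℝ (fun y : ℝ => (y : ℂ)) (Ioi (x / 2)) :=
    Complex.ofRealCLM.analyticOnNhd _
  have hre : AnalyticOnNhd ℝ (fun z : ℂ => z.re) (Set.univ : Set ℂ) :=
    Complex.reCLM.analyticOnNhd _
  have hcomp1 : AnalyticOnNhd ℝ (fun y : ℝ => PhiC q (y : ℂ)) (Ioi (x / 2)) := by
    have := hPhiR.comp hofReal (fun y hy => by
      simp only [Set.mem_setOf_eq, Complex.ofReal_re]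
      exact hy)
    exact this
  have hcomp2 : AnalyticOnNhd ℝ (fun y : ℝ => (PhiC q (y : ℂ)).re) (Ioi (x / 2)) := by
    have := hre.comp hcomp1 (fun y _ => Set.mem_univ _)
    exact this
  have hF : AnalyticOnNhd ℝ
      (fun y : ℝ => Real.log q + Real.log q * (PhiC q (y : ℂ)).re) (Ioi (x / 2)) := by
    intro y hy
    exact analyticAt_const.add (analyticAt_const.mul (hcomp2 y hy))
  have hxmem : x ∈ Ioi (x / 2) := by simp only [mem_Ioi]; linarith
  have hAx : AnalyticAt ℝ
      (fun y : ℝ => Real.log q + Real.log q * (PhiC q (y : ℂ)).re) x := hF x hxmem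
  apply hAx.congr
  filter_upwards [isOpen_Ioi.mem_nhds hxmem] with y hy
  have hy0 : (0 : ℝ) < y := lt_trans hε hy
  rw [PhiC_real hq y, Complex.ofReal_re, (hasDerivAt_qdg hq hy0).deriv]

end QDigammaAux

open QDigammaAux Set in
theorem stmt2 (q : ℝ) (hq : 1 < q) :
    StrictCompletelyMonotonicOn (deriv (qDigammaGT q)) (Set.Ioi 0) := by
  constructor
  · exact (analyticOnNhd_deriv_qdg hq).contDiffOn (uniqueDiffOn_Ioi 0)
  · intro n x hx
    rw [iter_eq hq n hx]
    have hL : 0 < Real.log q := Real.log_pos hq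
    have hG : 0 < GG q (n + 1) x := GG_pos hq (n + 1) hx
    unfold DD
    rcases n with _ | n
    · simp only [pow_zero, one_mul, if_pos]
      nlinarith
    · simp only [Nat.succ_ne_zero, if_false, zero_add]
      have h1 : ((-1 : ℝ) ^ (n + 1)) * ((-1 : ℝ) ^ (n + 1)) = 1 := by
        rw [← mul_pow]
        norm_num
      calc (0 : ℝ) < Real.log q * GG q (n + 1 + 1) x := mul_pos hL hG
        _ = (-1) ^ (n + 1) * ((-1) ^ (n + 1) * Real.log q * GG q (n + 1 + 1) x) := by
            rw [← mul_assoc, ← mul_assoc, h1, one_mul]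
end

section
/- Let 0<q<1. For every integer n ≥ 1 one has exp[2q(n−1)·ln q/(1−q)] ≤ (Γ_q(n))²/Γ_q(2n) ≤ 1. -/
/-- The q-gamma function for `0 < q < 1`:
`Γ_q(x) = (1-q)^{1-x} ∏_{j=0}^∞ (1-q^{j+1})/(1-q^{j+x})`. -/
noncomputable def qGamma (q x : ℝ) : ℝ :=
  (1 - q) ^ (1 - x) * ∏' j : ℕ, (1 - q ^ (j + 1)) / (1 - q ^ ((j : ℝ) + x))

namespace QG6

open Finset Real

variable {q : ℝ}

lemma sub_pow_pos (hq0 : 0 < q) (hq1 : q < 1) {k : ℕ} (hk : k ≠ 0) : 0 < 1 - q ^ k := by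
  have h : q ^ k < 1 := pow_lt_one₀ hq0.le hq1 hk
  linarith

lemma multipliable_aux {c : ℕ → ℝ} (hpos : ∀ j, 0 < c j)
    (hsum : Summable fun j => Real.log (c j)) : Multipliable c := by
  have h := hsum.hasSum.rexp
  have he : (Real.exp ∘ fun j => Real.log (c j)) = c :=
    funext fun j => Real.exp_log (hpos j)
  rw [he] at h
  exact ⟨_, h⟩

lemma summable_log (hq0 : 0 < q) (hq1 : q < 1) (d : ℕ) :
    Summable fun j : ℕ => Real.log (1 - q ^ (j + d + 1)) := by
  have h1q : 0 < 1 - q := by linarith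
  have hg : Summable (fun j : ℕ => (q ^ (d + 1) / (1 - q)) * q ^ j) :=
    (summable_geometric_of_lt_one hq0.le hq1).mul_left _
  rw [← summable_neg_iff]
  refine Summable.of_nonneg_of_le (fun j => ?_) (fun j => ?_) hg
  · have h1 : q ^ (j + d + 1) < 1 := pow_lt_one₀ hq0.le hq1 (by omega)
    have h0 : 0 < q ^ (j + d + 1) := pow_pos hq0 _
    have := Real.log_nonpos (by linarith) (by linarith : 1 - q ^ (j + d + 1) ≤ 1)
    linarith
  · have h1 : q ^ (j + d + 1) ≤ q := pow_le_of_le_one hq0.le hq1.le (by omega)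
    have h0 : 0 < q ^ (j + d + 1) := pow_pos hq0 _
    have hy : 0 < 1 - q ^ (j + d + 1) := by linarith
    have hlog : Real.log ((1 - q ^ (j + d + 1))⁻¹) ≤ (1 - q ^ (j + d + 1))⁻¹ - 1 :=
      Real.log_le_sub_one_of_pos (by positivity)
    rw [Real.log_inv] at hlog
    have he : (1 - q ^ (j + d + 1))⁻¹ - 1 = q ^ (j + d + 1) / (1 - q ^ (j + d + 1)) := by
      field_simp
      ring
    have hle2 : q ^ (j + d + 1) / (1 - q ^ (j + d + 1)) ≤ q ^ (j + d + 1) / (1 - q) := by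
      apply div_le_div_of_nonneg_left h0.le h1q
      linarith
    have he2 : q ^ (d + 1) / (1 - q) * q ^ j = q ^ (j + d + 1) / (1 - q) := by
      rw [show j + d + 1 = j + (d + 1) from by omega, pow_add]
      ring
    rw [he2]
    linarith [hlog, he ▸ hlog]

lemma tprod_telescope (hq0 : 0 < q) (hq1 : q < 1) (d : ℕ) :
    (∏' j : ℕ, (1 - q ^ (j + 1)) / (1 - q ^ (j + d + 1)))
      = ∏ k ∈ Finset.range d, (1 - q ^ (k + 1)) := by
  set a : ℕ → ℝ := fun j => 1 - q ^ (j + 1) with ha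
  have hapos : ∀ j, 0 < a j := fun j => sub_pow_pos hq0 hq1 (Nat.succ_ne_zero j)
  have hlog0 : Summable fun j => Real.log (a j) := by
    simpa using summable_log hq0 hq1 0
  have hlogd : Summable fun j => Real.log (a (j + d)) :=
    (summable_log hq0 hq1 d).congr fun j => rfl
  have mshift : Multipliable fun j => a (j + d) :=
    multipliable_aux (fun j => hapos _) hlogd
  have mshiftinv : Multipliable fun j => (a (j + d))⁻¹ := by
    refine multipliable_aux (fun j => inv_pos.2 (hapos _)) ?_
    refine (hlogd.neg).congr fun j => ?_
    rw [Real.log_inv]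
  have mf : Multipliable fun j => a j / a (j + d) := by
    refine multipliable_aux (fun j => div_pos (hapos _) (hapos _)) ?_
    refine (hlog0.sub hlogd).congr fun j => ?_
    rw [Real.log_div (hapos j).ne' (hapos _).ne']
  -- S := shifted product is nonzero
  set S : ℝ := ∏' j, a (j + d) with hS
  have hSne : S ≠ 0 := by
    intro h0
    have h1 : S * (∏' j, (a (j + d))⁻¹) = 1 := by
      rw [← Multipliable.tprod_mul mshift mshiftinv]
      have : (fun j => a (j + d) * (a (j + d))⁻¹) = fun _ : ℕ => (1 : ℝ) :=
        funext fun j => mul_inv_cancel₀ (hapos _).ne'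
      rw [this, tprod_one]
    rw [h0, zero_mul] at h1
    exact one_ne_zero h1.symm
  have h1 : (∏' j, a j / a (j + d)) * S = ∏' j, a j := by
    rw [hS, ← Multipliable.tprod_mul mf mshift]
    exact tprod_congr fun j => div_mul_cancel₀ _ (hapos _).ne'
  have h2 : (∏ k ∈ Finset.range d, a k) * S = ∏' j, a j :=
    Multipliable.prod_mul_tprod_nat_mul' mshift
  have h3 : (∏' j, a j / a (j + d)) = ∏ k ∈ Finset.range d, a k :=
    mul_right_cancel₀ hSne (h1.trans h2.symm)
  have h4 : (fun j : ℕ => (1 - q ^ (j + 1)) / (1 - q ^ (j + d + 1)))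
      = fun j => a j / a (j + d) := funext fun j => rfl
  rw [h4, h3]

lemma qGamma_nat (hq0 : 0 < q) (hq1 : q < 1) {m : ℕ} (hm : 1 ≤ m) :
    qGamma q m = (1 - q) ^ (1 - (m : ℝ)) * ∏ k ∈ Finset.range (m - 1), (1 - q ^ (k + 1)) := by
  obtain ⟨d, rfl⟩ : ∃ d, m = d + 1 := ⟨m - 1, by omega⟩
  unfold qGamma
  congr 1
  rw [show d + 1 - 1 = d from rfl, ← tprod_telescope hq0 hq1 d]
  refine tprod_congr fun j => ?_
  congr 2
  rw [← Real.rpow_natCast q (j + d + 1)]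
  congr 1
  push_cast
  ring

/-- key step inequality -/
lemma key (hq0 : 0 < q) (hq1 : q < 1) {u : ℝ} (hu0 : 0 < u) (huq : u ≤ q) :
    Real.exp (2 * q * Real.log q / (1 - q)) * ((1 - u ^ 2) * (1 - q * u ^ 2))
      ≤ (1 - u) ^ 2 := by
  have h1q : 0 < 1 - q := by linarith
  have hu1 : u < 1 := lt_of_le_of_lt huq hq1
  have huq1 : u * q ≤ 1 := by nlinarith
  have e3 : 1 - q * u ^ 2 ≤ (1 - u) * (1 + q + q ^ 2) := by
    nlinarith [mul_nonneg (sub_nonneg.2 huq) (show (0:ℝ) ≤ 1 + q - u * q by linarith)]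
  have e4 : 1 - u ^ 2 ≤ (1 - u) * (1 + q) := by nlinarith
  have hA : (1 - u ^ 2) * (1 - q * u ^ 2) ≤ (1 - u) ^ 2 * ((1 + q) * (1 + q + q ^ 2)) := by
    calc (1 - u ^ 2) * (1 - q * u ^ 2)
        ≤ ((1 - u) * (1 + q)) * ((1 - u) * (1 + q + q ^ 2)) := by
          apply mul_le_mul e4 e3 (by nlinarith) (mul_nonneg (by linarith) (by linarith))
      _ = (1 - u) ^ 2 * ((1 + q) * (1 + q + q ^ 2)) := by ring
  have hB : (1 + q) * (1 + q + q ^ 2) ≤ Real.exp (2 * q) := by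
    have h := Real.quadratic_le_exp_of_nonneg hq0.le
    have he : Real.exp (2 * q) = Real.exp q * Real.exp q := by
      rw [← Real.exp_add]; ring_nf
    nlinarith [Real.exp_pos q, pow_pos hq0 4]
  have hC : Real.exp (2 * q) ≤ Real.exp (-(2 * q * Real.log q / (1 - q))) := by
    apply Real.exp_le_exp.2
    have hlog : Real.log q ≤ q - 1 := Real.log_le_sub_one_of_pos hq0
    have : 2 * q * Real.log q / (1 - q) ≤ -(2 * q) := by
      rw [div_le_iff₀ h1q]
      nlinarith
    linarith
  have h4 : (1 - u ^ 2) * (1 - q * u ^ 2)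
      ≤ (1 - u) ^ 2 * Real.exp (-(2 * q * Real.log q / (1 - q))) :=
    hA.trans (by
      have h5 : (1 + q) * (1 + q + q ^ 2) ≤ Real.exp (-(2 * q * Real.log q / (1 - q))) :=
        hB.trans hC
      exact mul_le_mul_of_nonneg_left h5 (by positivity))
  have hE : (0:ℝ) < Real.exp (2 * q * Real.log q / (1 - q)) := Real.exp_pos _
  calc Real.exp (2 * q * Real.log q / (1 - q)) * ((1 - u ^ 2) * (1 - q * u ^ 2))
      ≤ Real.exp (2 * q * Real.log q / (1 - q)) *
        ((1 - u) ^ 2 * Real.exp (-(2 * q * Real.log q / (1 - q)))) :=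
        mul_le_mul_of_nonneg_left h4 hE.le
    _ = (1 - u) ^ 2 * (Real.exp (2 * q * Real.log q / (1 - q)) *
        Real.exp (-(2 * q * Real.log q / (1 - q)))) := by ring
    _ = (1 - u) ^ 2 := by rw [← Real.exp_add, add_neg_cancel, Real.exp_zero, mul_one]

lemma core (hq0 : 0 < q) (hq1 : q < 1) (m : ℕ) :
    Real.exp (2 * q * (m : ℝ) * Real.log q / (1 - q))
      ≤ (1 - q) * (∏ k ∈ Finset.range m, (1 - q ^ (k + 1))) ^ 2
          / (∏ k ∈ Finset.range (2 * m + 1), (1 - q ^ (k + 1))) ∧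
    (1 - q) * (∏ k ∈ Finset.range m, (1 - q ^ (k + 1))) ^ 2
          / (∏ k ∈ Finset.range (2 * m + 1), (1 - q ^ (k + 1))) ≤ 1 := by
  have h1q : 0 < 1 - q := by linarith
  induction m with
  | zero =>
      have h0 : ∏ k ∈ Finset.range (2 * 0 + 1), (1 - q ^ (k + 1)) = 1 - q := by
        norm_num [Finset.prod_range_one]
      rw [h0]
      norm_num
      rw [div_self h1q.ne']
      exact ⟨le_refl 1, le_refl 1⟩
  | succ m ih =>
      have hPpos : (0:ℝ) < ∏ k ∈ Finset.range m, (1 - q ^ (k + 1)) :=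
        Finset.prod_pos fun k _ => sub_pow_pos hq0 hq1 (Nat.succ_ne_zero k)
      have hDpos : (0:ℝ) < ∏ k ∈ Finset.range (2 * m + 1), (1 - q ^ (k + 1)) :=
        Finset.prod_pos fun k _ => sub_pow_pos hq0 hq1 (Nat.succ_ne_zero k)
      set P : ℝ := ∏ k ∈ Finset.range m, (1 - q ^ (k + 1)) with hP
      set D : ℝ := ∏ k ∈ Finset.range (2 * m + 1), (1 - q ^ (k + 1)) with hD
      set u : ℝ := q ^ (m + 1) with hu
      have hu0 : 0 < u := pow_pos hq0 _
      have huq : u ≤ q := pow_le_of_le_one hq0.le hq1.le (Nat.succ_ne_zero m)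
      have hu1 : u < 1 := lt_of_le_of_lt huq hq1
      have hPn : ∏ k ∈ Finset.range (m + 1), (1 - q ^ (k + 1)) = P * (1 - u) := by
        rw [Finset.prod_range_succ]
      have hq2m2 : q ^ (2 * m + 2) = u ^ 2 := by
        rw [hu, ← pow_mul]
        congr 1
        omega
      have hq2m3 : q ^ (2 * m + 3) = q * u ^ 2 := by
        rw [hu, ← pow_mul]
        rw [show 2 * m + 3 = (m + 1) * 2 + 1 from by omega, pow_succ]
        ring
      have hDn : ∏ k ∈ Finset.range (2 * (m + 1) + 1), (1 - q ^ (k + 1))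
          = D * ((1 - u ^ 2) * (1 - q * u ^ 2)) := by
        rw [show 2 * (m + 1) + 1 = (2 * m + 1) + 1 + 1 from by omega,
          Finset.prod_range_succ, Finset.prod_range_succ, ← hD]
        rw [show 2 * m + 1 + 1 = 2 * m + 2 from by omega,
          show 2 * m + 1 + 1 + 1 = 2 * m + 3 from by omega, hq2m2, hq2m3]
        ring
      have hA0 : (0:ℝ) < 1 - u ^ 2 := by nlinarith
      have hB0 : (0:ℝ) < 1 - q * u ^ 2 := by nlinarith
      have hkey := key hq0 hq1 hu0 huq
      constructor
      · -- lower bound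
        have hsplit : Real.exp (2 * q * ((m : ℝ) + 1) * Real.log q / (1 - q))
            = Real.exp (2 * q * (m : ℝ) * Real.log q / (1 - q)) *
              Real.exp (2 * q * Real.log q / (1 - q)) := by
          rw [← Real.exp_add]
          congr 1
          field_simp
        rw [hPn, hDn]
        push_cast
        rw [hsplit]
        have hstep : (1 - q) * P ^ 2 / D * Real.exp (2 * q * Real.log q / (1 - q))
            ≤ (1 - q) * (P * (1 - u)) ^ 2 / (D * ((1 - u ^ 2) * (1 - q * u ^ 2))) := by
          rw [div_mul_eq_mul_div, div_le_div_iff₀ (by positivity) (by positivity)]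
          have h6 : (0:ℝ) ≤ (1 - q) * P ^ 2 * D := by positivity
          nlinarith [mul_le_mul_of_nonneg_left hkey h6,
            Real.exp_pos (2 * q * Real.log q / (1 - q))]
        calc Real.exp (2 * q * (m:ℝ) * Real.log q / (1 - q)) *
              Real.exp (2 * q * Real.log q / (1 - q))
            ≤ ((1 - q) * P ^ 2 / D) * Real.exp (2 * q * Real.log q / (1 - q)) :=
              mul_le_mul_of_nonneg_right ih.1 (Real.exp_pos _).le
          _ ≤ (1 - q) * (P * (1 - u)) ^ 2 / (D * ((1 - u ^ 2) * (1 - q * u ^ 2))) := hstep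
      · -- upper bound
        rw [hPn, hDn]
        have hstep : (1 - q) * (P * (1 - u)) ^ 2 / (D * ((1 - u ^ 2) * (1 - q * u ^ 2)))
            ≤ (1 - q) * P ^ 2 / D := by
          rw [div_le_div_iff₀ (by positivity) (by positivity)]
          have hsq : (1 - u) ^ 2 ≤ (1 - u ^ 2) * (1 - q * u ^ 2) := by
            have hfac : (0:ℝ) ≤ (1 - u) * (u * (2 - q * u - q * u ^ 2)) := by
              apply mul_nonneg (by linarith)
              apply mul_nonneg hu0.le
              nlinarith
            nlinarith [hfac]
          nlinarith [mul_le_mul_of_nonneg_left hsq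
            (show (0:ℝ) ≤ (1 - q) * P ^ 2 * D by positivity)]
        exact hstep.trans ih.2

end QG6

theorem stmt6 (q : ℝ) (hq0 : 0 < q) (hq1 : q < 1) (n : ℕ) (hn : 1 ≤ n) :
    Real.exp (2 * q * ((n : ℝ) - 1) * Real.log q / (1 - q)) ≤
      (qGamma q n) ^ 2 / qGamma q (2 * n) ∧
    (qGamma q n) ^ 2 / qGamma q (2 * n) ≤ 1 := by
  have h1q : 0 < 1 - q := by linarith
  obtain ⟨m, rfl⟩ : ∃ m, n = m + 1 := ⟨n - 1, by omega⟩
  have h1 : qGamma q ((m + 1 : ℕ) : ℝ)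
      = (1 - q) ^ (1 - ((m + 1 : ℕ) : ℝ)) * ∏ k ∈ Finset.range m, (1 - q ^ (k + 1)) := by
    have := QG6.qGamma_nat hq0 hq1 (m := m + 1) (by omega)
    simpa using this
  have hc : 2 * ((m + 1 : ℕ) : ℝ) = ((2 * (m + 1) : ℕ) : ℝ) := by push_cast; ring
  have h2 : qGamma q (2 * ((m + 1 : ℕ) : ℝ))
      = (1 - q) ^ (1 - ((2 * (m + 1) : ℕ) : ℝ)) *
        ∏ k ∈ Finset.range (2 * m + 1), (1 - q ^ (k + 1)) := by
    have h2' := QG6.qGamma_nat hq0 hq1 (m := 2 * (m + 1)) (by omega)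
    rw [show 2 * (m + 1) - 1 = 2 * m + 1 from by omega] at h2'
    rw [hc, h2']
  set P : ℝ := ∏ k ∈ Finset.range m, (1 - q ^ (k + 1)) with hP
  set D : ℝ := ∏ k ∈ Finset.range (2 * m + 1), (1 - q ^ (k + 1)) with hD
  have hPpos : (0:ℝ) < P := Finset.prod_pos fun k _ => QG6.sub_pow_pos hq0 hq1 (Nat.succ_ne_zero k)
  have hDpos : (0:ℝ) < D := Finset.prod_pos fun k _ => QG6.sub_pow_pos hq0 hq1 (Nat.succ_ne_zero k)
  set X : ℝ := (1 - q) ^ (1 - ((m + 1 : ℕ) : ℝ)) with hX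
  set Y : ℝ := (1 - q) ^ (1 - ((2 * (m + 1) : ℕ) : ℝ)) with hY
  have hXpos : 0 < X := Real.rpow_pos_of_pos h1q _
  have hYpos : 0 < Y := Real.rpow_pos_of_pos h1q _
  have hXY : X * X = (1 - q) * Y := by
    have hy2 : (1 - q) * Y = (1 - q) ^ ((1:ℝ) + (1 - ((2 * (m + 1) : ℕ) : ℝ))) := by
      rw [Real.rpow_add h1q, Real.rpow_one]
    rw [hX, hY, ← Real.rpow_add h1q, hy2]
    congr 1
    push_cast
    ring
  have ratio : (qGamma q ((m + 1 : ℕ) : ℝ)) ^ 2 / qGamma q (2 * ((m + 1 : ℕ) : ℝ))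
      = (1 - q) * P ^ 2 / D := by
    rw [h1, h2]
    have e1 : (X * P) ^ 2 = ((1 - q) * Y) * P ^ 2 := by rw [← hXY]; ring
    rw [e1]
    field_simp [hYpos.ne', hDpos.ne']
  have hcast : ((m + 1 : ℕ) : ℝ) - 1 = (m : ℝ) := by push_cast; ring
  have core := QG6.core hq0 hq1 m
  constructor
  · rw [ratio, hcast]
    exact core.1
  · rw [ratio]
    exact core.2
end

section
/- Let 0<q<1 and let x₀ = x₀(q) be the unique positive zero of the q-digamma function ψ_q. Then the function x ↦ 1/ψ_q(x) is logarithmically completely monotonic on (x₀,∞). -/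
/-- The q-digamma function for `0 < q < 1`:
`ψ_q(x) = -ln(1-q) + ln q * ∑_{k=1}^∞ q^{kx}/(1-q^k)`. -/
noncomputable def qDigamma (q x : ℝ) : ℝ :=
  -Real.log (1 - q) + Real.log q * ∑' k : ℕ, q ^ (((k : ℝ) + 1) * x) / (1 - q ^ (k + 1))

/-- A positive function `f` is logarithmically completely monotonic on `s`:
`ln f` has derivatives of all orders on `s` and `(-1)^n (ln f)^(n)(x) ≥ 0`
for all `x ∈ s` and all `n ≥ 1`. -/
def LogCompletelyMonotonicOn (f : ℝ → ℝ) (s : Set ℝ) : Prop :=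
  (∀ x ∈ s, 0 < f x) ∧
  ContDiffOn ℝ (⊤ : ℕ∞) (fun y => Real.log (f y)) s ∧
  ∀ n : ℕ, 1 ≤ n → ∀ x ∈ s, 0 ≤ (-1 : ℝ) ^ n * iteratedDeriv n (fun y => Real.log (f y)) x

open Real Set Filter
open scoped NNReal ENNReal


noncomputable def qF (q : ℝ) (n : ℕ) (x : ℝ) : ℝ :=
  ∑' k : ℕ, ((k : ℝ) + 1) ^ n * (q ^ (((k : ℝ) + 1) * x) / (1 - q ^ (k + 1)))

variable {q : ℝ}

lemma qden_pos (hq0 : 0 < q) (hq1 : q < 1) (k : ℕ) : 0 < 1 - q ^ (k + 1) := by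
  have : q ^ (k + 1) < 1 := pow_lt_one₀ hq0.le hq1 (Nat.succ_ne_zero k)
  linarith

lemma qden_le (hq0 : 0 < q) (hq1 : q < 1) (k : ℕ) : 1 - q ≤ 1 - q ^ (k + 1) := by
  have : q ^ (k + 1) ≤ q ^ 1 := pow_le_pow_of_le_one hq0.le hq1.le (Nat.one_le_iff_ne_zero.2 (Nat.succ_ne_zero k))
  simp only [pow_one] at this
  linarith

lemma qrpow_eq (hq0 : 0 < q) (x : ℝ) (k : ℕ) :
    q ^ (((k : ℝ) + 1) * x) = (q ^ x) ^ (k + 1) := by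
  rw [mul_comm, Real.rpow_mul hq0.le]
  rw [show ((k : ℝ) + 1) = ((k + 1 : ℕ) : ℝ) by push_cast; ring, Real.rpow_natCast]

lemma qterm_nonneg (hq0 : 0 < q) (hq1 : q < 1) (n : ℕ) (x : ℝ) (k : ℕ) :
    0 ≤ ((k : ℝ) + 1) ^ n * (q ^ (((k : ℝ) + 1) * x) / (1 - q ^ (k + 1))) := by
  have h1 : (0:ℝ) < (k : ℝ) + 1 := by positivity
  have h2 := Real.rpow_pos_of_pos hq0 (((k : ℝ) + 1) * x)
  have h3 := qden_pos hq0 hq1 k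
  positivity

lemma qF_summable (hq0 : 0 < q) (hq1 : q < 1) (n : ℕ) {x : ℝ} (hx : 0 < x) :
    Summable fun k : ℕ => ((k : ℝ) + 1) ^ n * (q ^ (((k : ℝ) + 1) * x) / (1 - q ^ (k + 1))) := by
  have hr0 : 0 < q ^ x := Real.rpow_pos_of_pos hq0 x
  have hr1 : q ^ x < 1 := Real.rpow_lt_one hq0.le hq1 hx
  have hsum : Summable fun k : ℕ => ((k : ℝ)) ^ n * (q ^ x) ^ k :=
    summable_pow_mul_geometric_of_norm_lt_one n (by rw [Real.norm_eq_abs, abs_of_pos hr0]; exact hr1)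
  have hsum2 : Summable fun k : ℕ => ((k : ℝ) + 1) ^ n * (q ^ x) ^ (k + 1) := by
    have := hsum.comp_injective (Nat.succ_injective)
    refine this.congr fun k => ?_
    simp only [Function.comp_apply, Nat.succ_eq_add_one]
    push_cast
    ring
  refine Summable.of_nonneg_of_le (qterm_nonneg hq0 hq1 n x) (fun k => ?_)
    (hsum2.mul_right (1 / (1 - q)))
  rw [qrpow_eq hq0 x k]
  have h3 := qden_pos hq0 hq1 k
  have h4 := qden_le hq0 hq1 k
  have h5 : (0:ℝ) < 1 - q := by linarith
  have hb : (q ^ x) ^ (k + 1) / (1 - q ^ (k + 1)) ≤ (q ^ x) ^ (k + 1) * (1 / (1 - q)) := by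
    rw [div_eq_mul_inv, one_div]
    gcongr
  calc ((k : ℝ) + 1) ^ n * ((q ^ x) ^ (k + 1) / (1 - q ^ (k + 1)))
      ≤ ((k : ℝ) + 1) ^ n * ((q ^ x) ^ (k + 1) * (1 / (1 - q))) := by
        have : (0:ℝ) ≤ ((k : ℝ) + 1) ^ n := by positivity
        exact mul_le_mul_of_nonneg_left hb this
    _ = ((k : ℝ) + 1) ^ n * (q ^ x) ^ (k + 1) * (1 / (1 - q)) := by ring

lemma qF_pos (hq0 : 0 < q) (hq1 : q < 1) (n : ℕ) {x : ℝ} (hx : 0 < x) :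
    0 < qF q n x := by
  refine Summable.tsum_pos (qF_summable hq0 hq1 n hx) (qterm_nonneg hq0 hq1 n x) 0 ?_
  have h2 := Real.rpow_pos_of_pos hq0 (((0 : ℕ) : ℝ) + 1) 
  have h3 := qden_pos hq0 hq1 0
  have h4 := Real.rpow_pos_of_pos hq0 ((((0:ℕ) : ℝ) + 1) * x)
  positivity

lemma qF_hasDerivAt (hq0 : 0 < q) (hq1 : q < 1) (n : ℕ) {x : ℝ} (hx : 0 < x) :
    HasDerivAt (qF q n) (Real.log q * qF q (n + 1) x) x := by
  set g : ℕ → ℝ → ℝ := fun k y => ((k : ℝ) + 1) ^ n * (q ^ (((k : ℝ) + 1) * y) / (1 - q ^ (k + 1))) with hg_def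
  set g' : ℕ → ℝ → ℝ := fun k y =>
    Real.log q * (((k : ℝ) + 1) ^ (n + 1) * (q ^ (((k : ℝ) + 1) * y) / (1 - q ^ (k + 1)))) with hg'_def
  set u : ℕ → ℝ := fun k =>
    |Real.log q| * (((k : ℝ) + 1) ^ (n + 1) * (q ^ (((k : ℝ) + 1) * (x / 2)) / (1 - q ^ (k + 1)))) with hu_def
  have hu : Summable u := ((qF_summable hq0 hq1 (n + 1) (by linarith : (0:ℝ) < x / 2)).mul_left _)
  have hgd : ∀ k y, y ∈ Ioi (x / 2) → HasDerivAt (g k) (g' k y) y := by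
    intro k y _
    set c : ℝ := (k : ℝ) + 1 with hc_def
    have hc : 0 < c := by positivity
    have h1 : HasDerivAt (fun z : ℝ => (c * Real.log q) * z) (c * Real.log q) y := by
      simpa using (hasDerivAt_id y).const_mul (c * Real.log q)
    have h2 := h1.exp
    have heq : (fun z : ℝ => q ^ (c * z)) = fun z => Real.exp ((c * Real.log q) * z) := by
      funext z
      rw [Real.rpow_def_of_pos hq0]
      congr 1
      ring
    have h3 : HasDerivAt (fun z : ℝ => q ^ (c * z))
        (Real.exp ((c * Real.log q) * y) * (c * Real.log q)) y := by
      rw [heq]; exact h2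
    have h4 := (h3.div_const (1 - q ^ (k + 1))).const_mul (c ^ n)
    have hval : Real.exp ((c * Real.log q) * y) = q ^ (c * y) := by
      rw [Real.rpow_def_of_pos hq0]
      congr 1
      ring
    refine h4.congr_deriv (Eq.symm ?_)
    rw [hval, hg'_def]
    simp only []
    rw [pow_succ]
    ring
  have hgb : ∀ k y, y ∈ Ioi (x / 2) → ‖g' k y‖ ≤ u k := by
    intro k y hy
    have hden := qden_pos hq0 hq1 k
    have hrp := Real.rpow_pos_of_pos hq0 (((k : ℝ) + 1) * y)
    rw [hg'_def, hu_def]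
    simp only []
    rw [Real.norm_eq_abs, abs_mul, abs_of_nonneg (by positivity : (0:ℝ) ≤ ((k : ℝ) + 1) ^ (n + 1) * (q ^ (((k : ℝ) + 1) * y) / (1 - q ^ (k + 1))))]
    have hmono : q ^ (((k : ℝ) + 1) * y) ≤ q ^ (((k : ℝ) + 1) * (x / 2)) := by
      apply Real.rpow_le_rpow_of_exponent_ge hq0 hq1.le
      have : x / 2 ≤ y := le_of_lt hy
      have hk : (0:ℝ) ≤ (k : ℝ) + 1 := by positivity
      nlinarith
    gcongr
  have hmem : x ∈ Ioi (x / 2) := by simp [Set.mem_Ioi]; linarith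
  have hsum0 : Summable fun k => g k x := qF_summable hq0 hq1 n hx
  have H := hasDerivAt_tsum_of_isPreconnected hu isOpen_Ioi (convex_Ioi (x / 2)).isPreconnected
    hgd hgb hmem hsum0 hmem
  have : (∑' k, g' k x) = Real.log q * qF q (n + 1) x := by
    rw [hg'_def, qF]
    exact tsum_mul_left
  rw [this] at H
  exact H

noncomputable def Qd (q : ℝ) (x : ℝ) : ℝ := -Real.log (1 - q) + Real.log q * qF q 0 x

lemma qDigamma_eq_aux (q x : ℝ) :
    (-Real.log (1 - q) + Real.log q * ∑' k : ℕ, q ^ (((k : ℝ) + 1) * x) / (1 - q ^ (k + 1)))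
      = Qd q x := by
  rw [Qd, qF]
  congr 1
  congr 1
  exact tsum_congr fun k => by rw [pow_zero, one_mul]

lemma Qd_hasDerivAt (hq0 : 0 < q) (hq1 : q < 1) {x : ℝ} (hx : 0 < x) :
    HasDerivAt (Qd q) (Real.log q ^ 2 * qF q 1 x) x := by
  have h := ((qF_hasDerivAt hq0 hq1 0 hx).const_mul (Real.log q)).const_add (-Real.log (1 - q))
  refine h.congr_deriv (Eq.symm ?_)
  ring

lemma Qd_iteratedDeriv (hq0 : 0 < q) (hq1 : q < 1) (n : ℕ) :
    ∀ x : ℝ, 0 < x → iteratedDeriv (n + 1) (Qd q) x = Real.log q ^ (n + 2) * qF q (n + 1) x := by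
  induction n with
  | zero =>
    intro x hx
    rw [iteratedDeriv_one, (Qd_hasDerivAt hq0 hq1 hx).deriv]
  | succ n ih =>
    intro x hx
    rw [iteratedDeriv_succ]
    have hev : iteratedDeriv (n + 1) (Qd q) =ᶠ[nhds x] fun y => Real.log q ^ (n + 2) * qF q (n + 1) y := by
      filter_upwards [isOpen_Ioi.mem_nhds (Set.mem_Ioi.2 hx)] with y hy
      exact ih y hy
    rw [hev.deriv_eq]
    have h := (qF_hasDerivAt hq0 hq1 (n + 1) hx).const_mul (Real.log q ^ (n + 2))
    rw [h.deriv]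
    ring

/-- Completely monotone of order `n` on `s`. -/
def CMn : ℕ → (ℝ → ℝ) → Set ℝ → Prop
  | 0, f, s => ∀ x ∈ s, 0 ≤ f x
  | (n + 1), f, s => (∀ x ∈ s, 0 ≤ f x) ∧ (∀ x ∈ s, DifferentiableAt ℝ f x) ∧
      CMn n (fun x => -deriv f x) s

lemma CMn_nonneg {n : ℕ} {f : ℝ → ℝ} {s : Set ℝ} (h : CMn n f s) : ∀ x ∈ s, 0 ≤ f x := by
  cases n with
  | zero => exact h
  | succ n => exact h.1

lemma CMn_congr {s : Set ℝ} (hs : IsOpen s) :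
    ∀ (n : ℕ) (f g : ℝ → ℝ), (∀ x ∈ s, f x = g x) → CMn n f s → CMn n g s := by
  intro n
  induction n with
  | zero => intro f g hfg h x hx; rw [← hfg x hx]; exact h x hx
  | succ n ih =>
    intro f g hfg h
    have hev : ∀ x ∈ s, f =ᶠ[nhds x] g := fun x hx => by
      filter_upwards [hs.mem_nhds hx] with y hy; exact hfg y hy
    refine ⟨fun x hx => by rw [← hfg x hx]; exact h.1 x hx,
      fun x hx => (hev x hx).differentiableAt_iff.1 (h.2.1 x hx), ?_⟩
    exact ih _ _ (fun x hx => by rw [(hev x hx).deriv_eq]) h.2.2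

lemma CMn_of_succ {s : Set ℝ} : ∀ (n : ℕ) (f : ℝ → ℝ), CMn (n + 1) f s → CMn n f s := by
  intro n
  induction n with
  | zero => exact fun f h => h.1
  | succ n ih => exact fun f h => ⟨h.1, h.2.1, ih _ h.2.2⟩

lemma CMn_add {s : Set ℝ} (hs : IsOpen s) :
    ∀ (n : ℕ) (f g : ℝ → ℝ), CMn n f s → CMn n g s → CMn n (fun x => f x + g x) s := by
  intro n
  induction n with
  | zero => intro f g hf hg x hx; exact add_nonneg (hf x hx) (hg x hx)
  | succ n ih =>
    intro f g hf hg
    refine ⟨fun x hx => add_nonneg (hf.1 x hx) (hg.1 x hx),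
      fun x hx => (hf.2.1 x hx).add (hg.2.1 x hx), ?_⟩
    refine CMn_congr hs n (fun x => -deriv f x + -deriv g x) _ (fun x hx => ?_)
      (ih _ _ hf.2.2 hg.2.2)
    rw [deriv_fun_add (hf.2.1 x hx) (hg.2.1 x hx)]
    ring

lemma CMn_mul {s : Set ℝ} (hs : IsOpen s) :
    ∀ (n : ℕ) (f g : ℝ → ℝ), CMn n f s → CMn n g s → CMn n (fun x => f x * g x) s := by
  intro n
  induction n with
  | zero => intro f g hf hg x hx; exact mul_nonneg (hf x hx) (hg x hx)
  | succ n ih =>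
    intro f g hf hg
    refine ⟨fun x hx => mul_nonneg (hf.1 x hx) (hg.1 x hx),
      fun x hx => (hf.2.1 x hx).mul (hg.2.1 x hx), ?_⟩
    refine CMn_congr hs n (fun x => (-deriv f x) * g x + f x * (-deriv g x)) _ (fun x hx => ?_) ?_
    · rw [deriv_fun_mul (hf.2.1 x hx) (hg.2.1 x hx)]
      ring
    · exact CMn_add hs n _ _ (ih _ _ hf.2.2 (CMn_of_succ n g hg))
        (ih _ _ (CMn_of_succ n f hf) hg.2.2)

lemma CMn_chain {s : Set ℝ} (hs : IsOpen s) (G : ℕ → ℝ → ℝ)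
    (hpos : ∀ m, ∀ x ∈ s, 0 ≤ G m x)
    (hder : ∀ m, ∀ x ∈ s, HasDerivAt (G m) (-(G (m + 1) x)) x) :
    ∀ (n m : ℕ), CMn n (G m) s := by
  intro n
  induction n with
  | zero => exact fun m => hpos m
  | succ n ih =>
    intro m
    refine ⟨hpos m, fun x hx => (hder m x hx).differentiableAt, ?_⟩
    refine CMn_congr hs n (G (m + 1)) _ (fun x hx => ?_) (ih (m + 1))
    rw [(hder m x hx).deriv]
    ring

lemma CMn_iteratedDeriv {s : Set ℝ} (hs : IsOpen s) :
    ∀ (n : ℕ) (f : ℝ → ℝ), CMn n f s → ∀ x ∈ s, 0 ≤ (-1 : ℝ) ^ n * iteratedDeriv n f x := by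
  intro n
  induction n with
  | zero => intro f h x hx; simpa using h x hx
  | succ n ih =>
    intro f h x hx
    have h2 := ih _ h.2.2 x hx
    have h3 : iteratedDeriv n (fun y => -deriv f y) x = -iteratedDeriv n (deriv f) x :=
      iteratedDeriv_neg n (deriv f) x
    rw [iteratedDeriv_succ']
    rw [h3] at h2
    calc (0:ℝ) ≤ (-1) ^ n * -iteratedDeriv n (deriv f) x := h2
      _ = (-1) ^ (n + 1) * iteratedDeriv n (deriv f) x := by rw [pow_succ]; ring

open FormalMultilinearSeries in
lemma Qd_analyticAt (hq0 : 0 < q) (hq1 : q < 1) {x : ℝ} (hx : 0 < x) :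
    AnalyticAt ℝ (Qd q) x := by
  have h1q : (0:ℝ) < 1 - q := by linarith
  set c : ℕ → ℝ := fun n => if n = 0 then 0 else 1 / (1 - q ^ n) with hc_def
  set p := ofScalars ℝ c with hp_def
  have hcb : ∀ n, |c n| ≤ 1 / (1 - q) := by
    intro n
    rcases n with _ | n
    · simp only [hc_def, if_pos rfl, abs_zero]
      exact (one_div_pos.2 h1q).le
    · rw [hc_def]
      simp only [Nat.succ_ne_zero, if_false]
      have hd := qden_pos hq0 hq1 n
      rw [abs_of_nonneg (by positivity)]
      exact one_div_le_one_div_of_le h1q (qden_le hq0 hq1 n)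
  have hrad : 1 ≤ p.radius := by
    apply ENNReal.le_of_forall_nnreal_lt
    intro r hr
    apply p.le_radius_of_bound (1 / (1 - q))
    intro n
    rw [hp_def, ofScalars_norm]
    have hr1 : (r : ℝ) ≤ 1 := by
      have h2 : (r : ℝ≥0) ≤ 1 := by exact_mod_cast hr.le
      exact_mod_cast h2
    have h1 : ((r : ℝ)) ^ n ≤ 1 := pow_le_one₀ (NNReal.coe_nonneg r) hr1
    calc ‖c n‖ * (r:ℝ) ^ n ≤ (1 / (1 - q)) * 1 :=
          mul_le_mul (by rw [Real.norm_eq_abs]; exact hcb n) h1 (by positivity) (by positivity)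
      _ = 1 / (1 - q) := mul_one _
  have hball := p.hasFPowerSeriesOnBall (lt_of_lt_of_le zero_lt_one hrad)
  -- q ^ x ∈ ball
  have ht0 : 0 < q ^ x := Real.rpow_pos_of_pos hq0 x
  have ht1 : q ^ x < 1 := Real.rpow_lt_one hq0.le hq1 hx
  have hmem : q ^ x ∈ Metric.eball (0:ℝ) p.radius := by
    rw [mem_emetric_ball_zero_iff]
    refine lt_of_lt_of_le ?_ hrad
    have h2 : (‖q ^ x‖₊ : ℝ≥0∞) < ((1:ℝ≥0) : ℝ≥0∞) := by
      rw [ENNReal.coe_lt_coe, ← NNReal.coe_lt_coe]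
      simpa [Real.norm_eq_abs, abs_of_pos ht0] using ht1
    simpa [enorm_eq_nnnorm] using h2
  have hsumAn : AnalyticAt ℝ p.sum (q ^ x) := hball.analyticAt_of_mem hmem
  have hexpAn : AnalyticAt ℝ (fun y : ℝ => q ^ y) x := by
    have : (fun y : ℝ => q ^ y) = fun y => Real.exp (Real.log q * y) := by
      funext y; rw [Real.rpow_def_of_pos hq0]
    rw [this]
    exact analyticAt_rexp.comp (analyticAt_const.mul analyticAt_id)
  have hcomp : AnalyticAt ℝ (fun y => -Real.log (1 - q) + Real.log q * p.sum (q ^ y)) x :=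
    analyticAt_const.add (analyticAt_const.mul (hsumAn.comp hexpAn))
  apply hcomp.congr
  filter_upwards [isOpen_Ioi.mem_nhds (Set.mem_Ioi.2 hx)] with y hy
  have hty0 : 0 < q ^ y := Real.rpow_pos_of_pos hq0 y
  have hty1 : q ^ y < 1 := Real.rpow_lt_one hq0.le hq1 hy
  have hsummable : Summable fun n => c n * (q ^ y) ^ n := by
    apply Summable.of_nonneg_of_le (fun n => ?_) (fun n => ?_)
      ((summable_geometric_of_lt_one hty0.le hty1).mul_left (1 / (1 - q)))
    · rcases n with _ | n
      · simp [hc_def]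
      · rw [hc_def]
        simp only [Nat.succ_ne_zero, if_false]
        have := qden_pos hq0 hq1 n
        positivity
    · have h1 : c n * (q ^ y) ^ n ≤ (1 / (1 - q)) * (q ^ y) ^ n := by
        apply mul_le_mul_of_nonneg_right _ (by positivity)
        calc c n ≤ |c n| := le_abs_self _
          _ ≤ 1 / (1 - q) := hcb n
      exact h1
  have hps : p.sum (q ^ y) = qF q 0 y := by
    have h0 : p.sum (q ^ y) = ∑' n, c n * (q ^ y) ^ n := by
      rw [hp_def]
      rw [show (ofScalars ℝ c).sum = ofScalarsSum c from rfl, ofScalars_sum_eq]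
      exact tsum_congr fun n => by rw [smul_eq_mul]
    rw [h0, Summable.tsum_eq_zero_add hsummable]
    simp only [hc_def, if_pos rfl, zero_mul, zero_add]
    rw [qF]
    refine tsum_congr fun k => ?_
    simp only [Nat.succ_ne_zero, if_false]
    rw [← qrpow_eq hq0 y k, pow_zero, one_mul]
    ring
  rw [hps, Qd]

theorem stmt8 (q x₀ : ℝ) (hq0 : 0 < q) (hq1 : q < 1)
    (hx₀ : 0 < x₀) (hzero : qDigamma q x₀ = 0)
    (huniq : ∀ y : ℝ, 0 < y → qDigamma q y = 0 → y = x₀) :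
    LogCompletelyMonotonicOn (fun x => 1 / qDigamma q x) (Set.Ioi x₀) := by
  clear huniq
  have hL : Real.log q < 0 := Real.log_neg hq0 hq1
  have hqd : ∀ y : ℝ, qDigamma q y = Qd q y := fun y => qDigamma_eq_aux q y
  have hψd : ∀ y : ℝ, 0 < y → HasDerivAt (Qd q) (Real.log q ^ 2 * qF q 1 y) y :=
    fun y hy => Qd_hasDerivAt hq0 hq1 hy
  have hψpos : ∀ y ∈ Ioi x₀, 0 < Qd q y := by
    have hmono : StrictMonoOn (Qd q) (Ici x₀) := by
      apply strictMonoOn_of_deriv_pos (convex_Ici x₀)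
      · intro y hy
        exact (hψd y (lt_of_lt_of_le hx₀ hy)).differentiableAt.continuousAt.continuousWithinAt
      · intro y hy
        rw [interior_Ici] at hy
        have hy0 : 0 < y := lt_trans hx₀ hy
        rw [(hψd y hy0).deriv]
        have h1 := qF_pos hq0 hq1 1 hy0
        have h2 : 0 < Real.log q ^ 2 := by nlinarith
        exact mul_pos h2 h1
    intro y hy
    have h0 : Qd q x₀ = 0 := by rw [← hqd x₀]; exact hzero
    rw [← h0]
    exact hmono self_mem_Ici (le_of_lt (Set.mem_Ioi.1 hy)) (Set.mem_Ioi.1 hy)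
  set L := Real.log q with hL_def
  set G : ℕ → ℝ → ℝ := fun m x => (-L) ^ (m + 1) * qF q m x with hG_def
  have hGpos : ∀ m, ∀ y ∈ Ioi x₀, 0 ≤ G m y := by
    intro m y hy
    have hy0 : 0 < y := lt_trans hx₀ (Set.mem_Ioi.1 hy)
    have h1 := qF_pos hq0 hq1 m hy0
    have h2 : 0 < -L := by linarith
    positivity
  have hGder : ∀ m, ∀ y ∈ Ioi x₀, HasDerivAt (G m) (-(G (m + 1) y)) y := by
    intro m y hy
    have hy0 : 0 < y := lt_trans hx₀ (Set.mem_Ioi.1 hy)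
    have h := (qF_hasDerivAt hq0 hq1 m hy0).const_mul ((-L) ^ (m + 1))
    refine h.congr_deriv (Eq.symm ?_)
    rw [hG_def]
    simp only []
    rw [pow_succ]
    ring
  have hGcm : ∀ n m, CMn n (G m) (Ioi x₀) := CMn_chain isOpen_Ioi G hGpos hGder
  have hInvDer : ∀ y ∈ Ioi x₀, HasDerivAt (fun z => 1 / Qd q z)
      (-(L ^ 2 * qF q 1 y) / Qd q y ^ 2) y := by
    intro y hy
    have hy0 : 0 < y := lt_trans hx₀ (Set.mem_Ioi.1 hy)
    have h := (hψd y hy0).inv (hψpos y hy).ne'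
    simp only [one_div]
    exact h
  have hinv : ∀ n, CMn n (fun y => 1 / Qd q y) (Ioi x₀) := by
    intro n
    induction n with
    | zero =>
      intro y hy
      exact (one_div_pos.2 (hψpos y hy)).le
    | succ n ih =>
      refine ⟨fun y hy => (one_div_pos.2 (hψpos y hy)).le,
        fun y hy => (hInvDer y hy).differentiableAt, ?_⟩
      refine CMn_congr isOpen_Ioi n (fun y => G 1 y * (1 / Qd q y) * (1 / Qd q y)) _
        (fun y hy => ?_) ?_
      · rw [(hInvDer y hy).deriv, hG_def]
        simp only []
        ring
      · exact CMn_mul isOpen_Ioi n _ _ (CMn_mul isOpen_Ioi n _ _ (hGcm n 1) ih) ih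
  have hfun : (fun y => Real.log ((fun x : ℝ => 1 / qDigamma q x) y))
      = fun y => -Real.log (Qd q y) := by
    funext y
    simp only []
    rw [one_div, Real.log_inv, hqd]
  refine ⟨?_, ?_, ?_⟩
  · intro y hy
    simp only []
    rw [hqd]
    exact one_div_pos.2 (hψpos y hy)
  · rw [hfun]
    intro y hy
    have hy0 : 0 < y := lt_trans hx₀ (Set.mem_Ioi.1 hy)
    have hA : ContDiffAt ℝ (⊤ : ℕ∞) (Qd q) y := (Qd_analyticAt hq0 hq1 hy0).contDiffAt
    have hlog : ContDiffAt ℝ (⊤ : ℕ∞) (fun z => Real.log (Qd q z)) y :=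
      (Real.contDiffAt_log.2 (hψpos y hy).ne').comp y hA
    exact hlog.neg.contDiffWithinAt
  · intro n hn x hx
    rw [hfun]
    obtain ⟨m, rfl⟩ : ∃ m, n = m + 1 := ⟨n - 1, by omega⟩
    have hneg : iteratedDeriv (m + 1) (fun y => -Real.log (Qd q y)) x
        = -iteratedDeriv (m + 1) (fun y => Real.log (Qd q y)) x :=
      iteratedDeriv_neg (m + 1) (fun y => Real.log (Qd q y)) x
    rw [hneg, iteratedDeriv_succ']
    have hder_log : ∀ y ∈ Ioi x₀, deriv (fun z => Real.log (Qd q z)) y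
        = G 1 y * (1 / Qd q y) := by
      intro y hy
      have hy0 : 0 < y := lt_trans hx₀ (Set.mem_Ioi.1 hy)
      rw [((hψd y hy0).log (hψpos y hy).ne').deriv, hG_def]
      simp only []
      ring
    have hEq : iteratedDeriv m (deriv fun z => Real.log (Qd q z)) x
        = iteratedDeriv m (fun y => G 1 y * (1 / Qd q y)) x := by
      apply Filter.EventuallyEq.iteratedDeriv_eq
      filter_upwards [isOpen_Ioi.mem_nhds hx] with y hy
      exact hder_log y hy
    rw [hEq]
    have hfin := CMn_iteratedDeriv isOpen_Ioi m _
      (CMn_mul isOpen_Ioi m _ _ (hGcm m 1) (hinv m)) x hx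
    calc (0:ℝ) ≤ (-1) ^ m * iteratedDeriv m (fun y => G 1 y * (1 / Qd q y)) x := hfin
      _ = (-1) ^ (m + 1) * -iteratedDeriv m (fun y => G 1 y * (1 / Qd q y)) x := by
        rw [pow_succ]; ring
end

section
/- Let 0<q<1, let x₀ = x₀(q) be the unique positive zero of the q-digamma function ψ_q, and let a > 1. Then for all x > x₀ and y > x₀ one has [ψ_q(x)]^{1/a}·[ψ_q(y)]^{1−1/a} ≤ ψ_q(x/a + (1−1/a)y). -/
namespace QDigammaAux

variable {q : ℝ}

lemma denom_pos (hq0 : 0 < q) (hq1 : q < 1) (k : ℕ) : 0 < 1 - q ^ (k + 1) := by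
  have : q ^ (k + 1) < 1 := pow_lt_one₀ hq0.le hq1 (Nat.succ_ne_zero k)
  linarith

lemma term_eq (hq0 : 0 < q) (x : ℝ) (k : ℕ) :
    q ^ (((k : ℝ) + 1) * x) = (q ^ x) ^ (k + 1) := by
  rw [← Real.rpow_natCast (q ^ x) (k + 1), ← Real.rpow_mul hq0.le]
  push_cast
  ring_nf

lemma aux_summable (hq0 : 0 < q) (hq1 : q < 1) {x : ℝ} (hx : 0 < x) :
    Summable (fun k : ℕ => q ^ (((k : ℝ) + 1) * x) / (1 - q ^ (k + 1))) := by
  have hqx0 : 0 ≤ q ^ x := Real.rpow_nonneg hq0.le x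
  have hqx1 : q ^ x < 1 := Real.rpow_lt_one hq0.le hq1 hx
  have hgeo : Summable (fun k : ℕ => (q ^ x) ^ k * (q ^ x / (1 - q))) :=
    (summable_geometric_of_lt_one hqx0 hqx1).mul_right _
  refine Summable.of_nonneg_of_le (fun k => ?_) (fun k => ?_) hgeo
  · exact div_nonneg (Real.rpow_nonneg hq0.le _) (denom_pos hq0 hq1 k).le
  · rw [term_eq hq0 x k]
    have h1 : 1 - q ≤ 1 - q ^ (k + 1) := by
      have : q ^ (k + 1) ≤ q := pow_le_of_le_one hq0.le hq1.le (Nat.succ_ne_zero k)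
      linarith
    calc (q ^ x) ^ (k + 1) / (1 - q ^ (k + 1)) ≤ (q ^ x) ^ (k + 1) / (1 - q) := by
          apply div_le_div_of_nonneg_left (pow_nonneg hqx0 _) (by linarith) h1
      _ = (q ^ x) ^ k * (q ^ x / (1 - q)) := by rw [pow_succ, mul_div_assoc]

lemma psi_pos (hq0 : 0 < q) (hq1 : q < 1) {x₀ x : ℝ} (hx₀ : 0 < x₀)
    (hzero : qDigamma q x₀ = 0) (hx : x₀ < x) : 0 < qDigamma q x := by
  have hL : Real.log q < 0 := Real.log_neg hq0 hq1
  have hx0 : 0 < x := hx₀.trans hx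
  have hS : (∑' k : ℕ, q ^ (((k : ℝ) + 1) * x) / (1 - q ^ (k + 1))) <
      ∑' k : ℕ, q ^ (((k : ℝ) + 1) * x₀) / (1 - q ^ (k + 1)) := by
    refine Summable.tsum_lt_tsum (i := 0) (fun k => ?_) ?_ (aux_summable hq0 hq1 hx0)
      (aux_summable hq0 hq1 hx₀)
    · have h := Real.rpow_le_rpow_of_exponent_ge hq0 hq1.le
        (by nlinarith [Nat.cast_nonneg (α := ℝ) k] : ((k : ℝ) + 1) * x₀ ≤ ((k : ℝ) + 1) * x)
      exact (div_le_div_iff_of_pos_right (denom_pos hq0 hq1 k)).mpr h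
    · apply (div_lt_div_iff_of_pos_right (denom_pos hq0 hq1 0)).mpr
      exact Real.rpow_lt_rpow_of_exponent_gt hq0 hq1 (by push_cast; nlinarith)
  have : Real.log q * (∑' k : ℕ, q ^ (((k : ℝ) + 1) * x₀) / (1 - q ^ (k + 1))) <
      Real.log q * ∑' k : ℕ, q ^ (((k : ℝ) + 1) * x) / (1 - q ^ (k + 1)) :=
    mul_lt_mul_of_neg_left hS hL
  have h0 := hzero
  unfold qDigamma at h0 ⊢
  linarith

lemma psi_concave (hq0 : 0 < q) (hq1 : q < 1) {x y t : ℝ} (hx : 0 < x) (hy : 0 < y)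
    (ht0 : 0 < t) (ht1 : t < 1) :
    t * qDigamma q x + (1 - t) * qDigamma q y ≤ qDigamma q (t * x + (1 - t) * y) := by
  have hL : Real.log q < 0 := Real.log_neg hq0 hq1
  have hz : 0 < t * x + (1 - t) * y := by nlinarith
  set Sx := ∑' k : ℕ, q ^ (((k : ℝ) + 1) * x) / (1 - q ^ (k + 1)) with hSx
  set Sy := ∑' k : ℕ, q ^ (((k : ℝ) + 1) * y) / (1 - q ^ (k + 1)) with hSy
  set z := t * x + (1 - t) * y with hzdef
  have hsx := aux_summable hq0 hq1 hx
  have hsy := aux_summable hq0 hq1 hy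
  have key : (∑' k : ℕ, q ^ (((k : ℝ) + 1) * z) / (1 - q ^ (k + 1))) ≤ t * Sx + (1 - t) * Sy := by
    have hterm : ∀ k : ℕ, q ^ (((k : ℝ) + 1) * z) / (1 - q ^ (k + 1)) ≤
        t * (q ^ (((k : ℝ) + 1) * x) / (1 - q ^ (k + 1))) +
        (1 - t) * (q ^ (((k : ℝ) + 1) * y) / (1 - q ^ (k + 1))) := by
      intro k
      set c : ℝ := (k : ℝ) + 1
      have hnum : q ^ (c * z) ≤ t * q ^ (c * x) + (1 - t) * q ^ (c * y) := by
        have hcz : q ^ (c * z) = Real.exp (t * (Real.log q * (c * x)) +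
            (1 - t) * (Real.log q * (c * y))) := by
          rw [Real.rpow_def_of_pos hq0]
          congr 1
          simp only [hzdef]
          ring
        have hcx : q ^ (c * x) = Real.exp (Real.log q * (c * x)) :=
          Real.rpow_def_of_pos hq0 _
        have hcy : q ^ (c * y) = Real.exp (Real.log q * (c * y)) :=
          Real.rpow_def_of_pos hq0 _
        rw [hcz, hcx, hcy]
        have := convexOn_exp.2 (Set.mem_univ (Real.log q * (c * x)))
          (Set.mem_univ (Real.log q * (c * y))) ht0.le (by linarith : (0:ℝ) ≤ 1 - t)
          (by ring)
        simpa using this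
      have hd := denom_pos hq0 hq1 k
      rw [div_le_iff₀ hd] at *
      calc q ^ (c * z) ≤ t * q ^ (c * x) + (1 - t) * q ^ (c * y) := hnum
        _ = (t * (q ^ (c * x) / (1 - q ^ (k + 1))) +
            (1 - t) * (q ^ (c * y) / (1 - q ^ (k + 1)))) * (1 - q ^ (k + 1)) := by
          field_simp
    calc (∑' k : ℕ, q ^ (((k : ℝ) + 1) * z) / (1 - q ^ (k + 1)))
        ≤ ∑' k : ℕ, (t * (q ^ (((k : ℝ) + 1) * x) / (1 - q ^ (k + 1))) +
            (1 - t) * (q ^ (((k : ℝ) + 1) * y) / (1 - q ^ (k + 1)))) :=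
          Summable.tsum_le_tsum hterm (aux_summable hq0 hq1 hz) ((hsx.mul_left t).add (hsy.mul_left (1 - t)))
      _ = t * Sx + (1 - t) * Sy := by
          rw [Summable.tsum_add (hsx.mul_left t) (hsy.mul_left (1 - t)), tsum_mul_left, tsum_mul_left]
  have := mul_le_mul_of_nonpos_left key hL.le
  unfold qDigamma
  rw [← hSx, ← hSy]
  nlinarith [this]

end QDigammaAux

theorem stmt9 (q x₀ a : ℝ) (hq0 : 0 < q) (hq1 : q < 1)
    (hx₀ : 0 < x₀) (hzero : qDigamma q x₀ = 0)
    (huniq : ∀ y : ℝ, 0 < y → qDigamma q y = 0 → y = x₀)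
    (ha : 1 < a) :
    ∀ x y : ℝ, x₀ < x → x₀ < y →
      (qDigamma q x) ^ (1 / a) * (qDigamma q y) ^ (1 - 1 / a) ≤
        qDigamma q (x / a + (1 - 1 / a) * y) := by
  intro x y hx hy
  have ha0 : 0 < a := by linarith
  have ht0 : 0 < 1 / a := by positivity
  have ht1 : 1 / a < 1 := by rw [div_lt_one ha0]; exact ha
  have hpx := QDigammaAux.psi_pos hq0 hq1 hx₀ hzero hx
  have hpy := QDigammaAux.psi_pos hq0 hq1 hx₀ hzero hy
  have hgm : (qDigamma q x) ^ (1 / a) * (qDigamma q y) ^ (1 - 1 / a) ≤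
      (1 / a) * qDigamma q x + (1 - 1 / a) * qDigamma q y :=
    Real.geom_mean_le_arith_mean2_weighted ht0.le (by linarith) hpx.le hpy.le (by ring)
  have hconc := QDigammaAux.psi_concave hq0 hq1 (hx₀.trans hx) (hx₀.trans hy) ht0 ht1
  rw [div_eq_mul_inv x a, mul_comm x a⁻¹, ← one_div]
  exact hgm.trans hconc
end

section
/- Let 0<q<1 and let x₀ = x₀(q) be the unique positive zero of the q-digamma function ψ_q. Then the q-gamma function Γ_q is logarithmically completely monotonic on (0, x₀). -/
open Real Filter

namespace QG

variable (q : ℝ)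

/-- coefficient c k = (k+1) log q -/
noncomputable def c (k : ℕ) : ℝ := ((k : ℝ) + 1) * Real.log q

/-- weight a k = 1/((k+1)(1-q^{k+1})) -/
noncomputable def w (k : ℕ) : ℝ := (((k : ℝ) + 1) * (1 - q ^ (k + 1)))⁻¹

/-- n-th term of the series for (log Γ_q)^{(n)} -/
noncomputable def term (n k : ℕ) (x : ℝ) : ℝ := c q k ^ n * Real.exp (c q k * x) * w q k

/-- candidate n-th derivative of log Γ_q -/
noncomputable def G (n : ℕ) (x : ℝ) : ℝ :=
  (if n = 0 then (1 - x) * Real.log (1 - q) + ∑' j : ℕ, Real.log (1 - q ^ (j + 1))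
   else if n = 1 then -Real.log (1 - q) else 0) + ∑' k : ℕ, term q n k x

variable {q} (hq0 : 0 < q) (hq1 : q < 1)
include hq0 hq1

lemma hlq : Real.log q < 0 := Real.log_neg hq0 hq1

lemma hc_neg (k : ℕ) : c q k < 0 :=
  mul_neg_of_pos_of_neg (by positivity) (hlq hq0 hq1)

lemma hpow_lt_one (k : ℕ) : q ^ (k + 1) < 1 :=
  pow_lt_one₀ hq0.le hq1 (Nat.succ_ne_zero k)

lemma hw_pos (k : ℕ) : 0 < w q k := by
  have h1 := hpow_lt_one hq0 hq1 k
  have h2 : (0:ℝ) < 1 - q ^ (k+1) := by linarith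
  rw [w]
  positivity

lemma hw_le (k : ℕ) : w q k ≤ (1 - q)⁻¹ := by
  have h1 : (1 : ℝ) ≤ (k : ℝ) + 1 := by linarith [Nat.cast_nonneg (α := ℝ) k]
  have h2 : q ^ (k + 1) ≤ q := by
    calc q ^ (k+1) ≤ q ^ 1 := pow_le_pow_of_le_one hq0.le hq1.le (by omega)
    _ = q := pow_one q
  have hq' : 0 < 1 - q := by linarith
  rw [w]
  apply inv_anti₀ hq'
  calc 1 - q ≤ 1 - q^(k+1) := by linarith
  _ = 1 * (1 - q^(k+1)) := (one_mul _).symm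
  _ ≤ ((k:ℝ)+1) * (1 - q^(k+1)) := by
      apply mul_le_mul_of_nonneg_right h1
      linarith [hpow_lt_one hq0 hq1 k]

/-- master summability -/
lemma sum_master (m : ℕ) {t : ℝ} (ht : 0 < t) :
    Summable (fun k : ℕ => ((k : ℝ) + 1) ^ m * Real.exp (c q k * t)) := by
  set r : ℝ := Real.exp (Real.log q * t) with hr
  have hr0 : 0 < r := Real.exp_pos _
  have hr1 : r < 1 := by
    rw [hr, Real.exp_lt_one_iff]
    exact mul_neg_of_neg_of_pos (hlq hq0 hq1) ht
  have hs : Summable (fun k : ℕ => ((k : ℝ)) ^ m * r ^ k) := by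
    have := summable_pow_mul_geometric_of_norm_lt_one (R := ℝ) m
      (r := r) (by rwa [Real.norm_eq_abs, abs_of_pos hr0])
    simpa using this
  have hs2 : Summable (fun k : ℕ => ((k : ℝ) + 1) ^ m * r ^ (k + 1)) := by
    have := (summable_nat_add_iff (f := fun k : ℕ => ((k : ℝ)) ^ m * r ^ k) 1).2 hs
    simpa [Nat.cast_add] using this
  apply hs2.congr
  intro k
  have : Real.exp (c q k * t) = r ^ (k + 1) := by
    rw [hr, ← Real.exp_nat_mul, c]
    push_cast
    ring_nf
  rw [this]

lemma term_abs_le (m : ℕ) {t y : ℝ} (ht : 0 < t) (hty : t ≤ y) (k : ℕ) :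
    |term q m k y| ≤ (|Real.log q| ^ m * (1 - q)⁻¹) * (((k : ℝ) + 1) ^ m * Real.exp (c q k * t)) := by
  have hw := hw_pos hq0 hq1 k
  have hwle := hw_le hq0 hq1 k
  have hq' : (0:ℝ) < 1 - q := by linarith
  have hck := hc_neg hq0 hq1 k
  have h1 : |term q m k y| = |c q k| ^ m * Real.exp (c q k * y) * w q k := by
    rw [term, abs_mul, abs_mul, abs_pow, abs_of_pos (Real.exp_pos _), abs_of_pos hw]
  rw [h1]
  have hce : |c q k| ^ m = ((k:ℝ)+1) ^ m * |Real.log q| ^ m := by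
    rw [c, abs_mul, mul_pow, abs_of_pos (show (0:ℝ) < (k:ℝ)+1 by positivity)]
  have hexp : Real.exp (c q k * y) ≤ Real.exp (c q k * t) := by
    apply Real.exp_le_exp.2
    nlinarith
  calc |c q k| ^ m * Real.exp (c q k * y) * w q k
      ≤ |c q k| ^ m * Real.exp (c q k * t) * (1-q)⁻¹ := by
        apply mul_le_mul (mul_le_mul_of_nonneg_left hexp (by positivity)) hwle hw.le (by positivity)
    _ = (|Real.log q| ^ m * (1 - q)⁻¹) * (((k : ℝ) + 1) ^ m * Real.exp (c q k * t)) := by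
        rw [hce]; ring

lemma term_summable (m : ℕ) {x : ℝ} (hx : 0 < x) : Summable (fun k => term q m k x) := by
  apply Summable.of_abs
  apply Summable.of_nonneg_of_le (fun k => abs_nonneg _)
    (fun k => term_abs_le hq0 hq1 m hx le_rfl k)
  exact ((sum_master hq0 hq1 m hx).mul_left _)

omit hq0 hq1 in
lemma term_hasDerivAt (n k : ℕ) (y : ℝ) :
    HasDerivAt (fun z => term q n k z) (term q (n+1) k y) y := by
  have h1 : HasDerivAt (fun z : ℝ => c q k * z) (c q k) y := by
    simpa using (hasDerivAt_id y).const_mul (c q k)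
  have h2 := h1.exp
  have h3 := (h2.const_mul (c q k ^ n)).mul_const (w q k)
  have e : term q (n+1) k y = c q k ^ n * (Real.exp (c q k * y) * c q k) * w q k := by
    rw [term, pow_succ]; ring
  rw [e]; exact h3

/-- term-by-term derivative of the tail series -/
lemma tsum_hasDerivAt (n : ℕ) {x : ℝ} (hx : 0 < x) :
    HasDerivAt (fun y => ∑' k : ℕ, term q n k y) (∑' k : ℕ, term q (n+1) k x) x := by
  have hx2 : 0 < x / 2 := by linarith
  have hmem : x ∈ Set.Ioi (x/2) := by simp only [Set.mem_Ioi]; linarith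
  apply hasDerivAt_tsum_of_isPreconnected
    (g := fun (k : ℕ) (y : ℝ) => term q n k y)
    (g' := fun (k : ℕ) (y : ℝ) => term q (n+1) k y)
    (t := Set.Ioi (x/2))
    (u := fun k : ℕ => (|Real.log q| ^ (n+1) * (1 - q)⁻¹) *
      (((k : ℝ) + 1) ^ (n+1) * Real.exp (c q k * (x/2))))
    (((sum_master hq0 hq1 (n+1) hx2).mul_left _))
    isOpen_Ioi (isPreconnected_Ioi) (fun k y _ => term_hasDerivAt n k y)
    (fun k y hy => ?_) hmem
    (term_summable hq0 hq1 n hx) hmem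
  rw [Real.norm_eq_abs]
  exact term_abs_le hq0 hq1 (n+1) hx2 (le_of_lt hy) k

lemma G_hasDerivAt (n : ℕ) {x : ℝ} (hx : 0 < x) :
    HasDerivAt (G q n) (G q (n+1) x) x := by
  rcases Nat.eq_zero_or_pos n with hn | hn
  · subst hn
    have h1 : HasDerivAt (fun y : ℝ => (1 - y) * Real.log (1 - q) +
        ∑' j : ℕ, Real.log (1 - q ^ (j + 1))) (-Real.log (1 - q)) x := by
      have : HasDerivAt (fun y : ℝ => (1 - y) * Real.log (1 - q)) (-Real.log (1 - q)) x := by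
        have := ((hasDerivAt_id x).const_sub 1).mul_const (Real.log (1 - q))
        simpa using this
      simpa using this.add_const (∑' j : ℕ, Real.log (1 - q ^ (j + 1)))
    have := h1.add (tsum_hasDerivAt hq0 hq1 0 hx)
    exact this.congr_deriv (by simp [G])
  · have hn0 : n ≠ 0 := by omega
    have hfun : G q n = fun y => (if n = 1 then -Real.log (1-q) else 0) + ∑' k : ℕ, term q n k y := by
      funext y; simp [G, hn0]
    rw [hfun]
    have h2 := (hasDerivAt_const x (if n = 1 then -Real.log (1-q) else 0)).add
      (tsum_hasDerivAt hq0 hq1 n hx)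
    have hn1 : n + 1 ≠ 0 := by omega
    have hn2 : n + 1 ≠ 1 := by omega
    exact h2.congr_deriv (by simp [G, hn0, hn1, hn2])

/-- identification of iterated derivatives on Ioi 0 -/
lemma iteratedDeriv_G (n : ℕ) {x : ℝ} (hx : 0 < x) :
    iteratedDeriv n (G q 0) x = G q n x := by
  induction n generalizing x with
  | zero => simp
  | succ n ih =>
    rw [iteratedDeriv_succ]
    have hev : iteratedDeriv n (G q 0) =ᶠ[nhds x] G q n := by
      filter_upwards [isOpen_Ioi.mem_nhds (show x ∈ Set.Ioi (0:ℝ) from hx)] with y hy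
      exact ih hy
    rw [hev.deriv_eq]
    exact (G_hasDerivAt hq0 hq1 n hx).deriv

omit hq0 hq1 in
lemma neg_log_one_sub_le {y : ℝ} (h0 : 0 ≤ y) (h1 : y < 1) : -Real.log (1-y) ≤ y / (1-y) := by
  have h2 : 0 < 1 - y := by linarith
  have := Real.log_le_sub_one_of_pos (inv_pos.2 h2)
  rw [Real.log_inv] at this
  have h3 : (1-y)⁻¹ - 1 = y / (1-y) := by field_simp; ring
  linarith

omit hq0 hq1 in
lemma summable_log_geom {g : ℕ → ℝ} (hg0 : ∀ j, 0 ≤ g j) {C r b : ℝ} (hr0 : 0 ≤ r) (hr1 : r < 1)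
    (hC : 0 ≤ C) (hb1 : b < 1) (hgb : ∀ j, g j ≤ b) (hgle : ∀ j, g j ≤ C * r ^ j) :
    Summable (fun j : ℕ => Real.log (1 - g j)) := by
  have hb : 0 < 1 - b := by linarith
  have hsum : Summable (fun j : ℕ => (C / (1-b)) * r ^ j) :=
    (summable_geometric_of_lt_one hr0 hr1).mul_left _
  have h : Summable (fun j : ℕ => -Real.log (1 - g j)) := by
    apply Summable.of_nonneg_of_le (fun j => ?_) (fun j => ?_) hsum
    · have : Real.log (1 - g j) ≤ 0 := Real.log_nonpos (by linarith [hgb j]) (by linarith [hg0 j])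
      linarith
    · have h1 : g j < 1 := lt_of_le_of_lt (hgb j) hb1
      have h2 : 0 < 1 - g j := by linarith
      calc -Real.log (1 - g j) ≤ g j / (1 - g j) := neg_log_one_sub_le (hg0 j) h1
      _ ≤ (C * r ^ j) / (1 - b) :=
          div_le_div₀ (by positivity) (hgle j) hb (by linarith [hgb j])
      _ = (C / (1-b)) * r ^ j := by ring
  simpa using h.neg

/-- positivity of p j and basic facts -/
lemma rpow_lt_one' {y : ℝ} (hy : 0 < y) : q ^ y < 1 :=
  Real.rpow_lt_one hq0.le hq1 hy

lemma S1 : Summable (fun j : ℕ => Real.log (1 - q ^ (j+1))) := by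
  apply summable_log_geom (fun j => by positivity) hq0.le hq1 hq0.le hq1
    (fun j => ?_) (fun j => ?_)
  · calc q ^ (j+1) ≤ q ^ 1 := pow_le_pow_of_le_one hq0.le hq1.le (by omega)
    _ = q := pow_one q
  · rw [pow_succ]
    exact le_of_eq (mul_comm _ _)

lemma S2 {x : ℝ} (hx : 0 < x) : Summable (fun j : ℕ => Real.log (1 - q ^ ((j:ℝ)+x))) := by
  have hqx1 : q ^ (x:ℝ) < 1 := rpow_lt_one' hq0 hq1 hx
  have hqx0 : 0 < q ^ (x:ℝ) := Real.rpow_pos_of_pos hq0 x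
  apply summable_log_geom (fun j => (Real.rpow_pos_of_pos hq0 _).le) hq0.le hq1 hqx0.le
    hqx1 (fun j => ?_) (fun j => ?_)
  · rw [Real.rpow_add hq0, Real.rpow_natCast]
    have h1 : q ^ j ≤ 1 := pow_le_one₀ hq0.le hq1.le
    nlinarith [hqx0]
  · rw [Real.rpow_add hq0, Real.rpow_natCast, mul_comm]

lemma pow_key {x : ℝ} (j k : ℕ) :
    (q ^ ((j:ℝ)+x)) ^ (k+1) = q ^ (x*((k:ℝ)+1)) * ((q^(k+1) : ℝ)) ^ j := by
  rw [← Real.rpow_natCast (q ^ ((j:ℝ)+x)) (k+1), ← Real.rpow_mul hq0.le,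
      ← pow_mul, ← Real.rpow_natCast q ((k+1)*j), ← Real.rpow_add hq0]
  congr 1
  push_cast
  ring

omit hq1 in
lemma exp_term (k : ℕ) (x : ℝ) : term q 0 k x = q ^ (x*((k:ℝ)+1)) * w q k := by
  rw [term, pow_zero, one_mul, Real.rpow_def_of_pos hq0, c]
  congr 2
  ring

set_option maxHeartbeats 1000000 in
lemma tail_eq {x : ℝ} (hx : 0 < x) :
    ∑' j : ℕ, -Real.log (1 - q ^ ((j:ℝ)+x)) = ∑' k : ℕ, term q 0 k x := by
  have hp0 : ∀ j : ℕ, 0 < q ^ ((j:ℝ)+x) := fun j => Real.rpow_pos_of_pos hq0 _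
  have hp1 : ∀ j : ℕ, q ^ ((j:ℝ)+x) < 1 := fun j => rpow_lt_one' hq0 hq1 (by positivity)
  set F : ℕ × ℕ → ℝ := fun jk => (q ^ ((jk.1:ℝ)+x)) ^ (jk.2+1) / ((jk.2 : ℝ)+1) with hF
  have hFnn : 0 ≤ F := fun jk => by
    have := (hp0 jk.1).le
    positivity
  have hrow : ∀ j : ℕ, HasSum (fun k => F (j,k)) (-Real.log (1 - q ^ ((j:ℝ)+x))) := fun j =>
    hasSum_pow_div_log_of_abs_lt_one (by rw [abs_of_pos (hp0 j)]; exact hp1 j)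
  have hrowS : ∀ j : ℕ, Summable fun k => F (j,k) := fun j => (hrow j).summable
  have hFs : Summable F := (summable_prod_of_nonneg hFnn).2 ⟨hrowS, by
    apply Summable.congr ((S2 hq0 hq1 hx).neg)
    intro j
    exact ((hrow j).tsum_eq).symm⟩
  have key : ∀ j k : ℕ, F (j,k) = (q ^ (x*((k:ℝ)+1)) / ((k:ℝ)+1)) * ((q^(k+1) : ℝ)) ^ j := by
    intro j k
    rw [hF]
    simp only
    rw [pow_key hq0 hq1 j k]
    ring
  have hcolS : ∀ k : ℕ, Summable (fun j => F (j,k)) := by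
    intro k
    apply Summable.congr (((summable_geometric_of_lt_one (pow_nonneg hq0.le _)
      (hpow_lt_one hq0 hq1 k)).mul_left (q ^ (x*((k:ℝ)+1)) / ((k:ℝ)+1))))
    intro j
    exact (key j k).symm
  have hcol : ∀ k : ℕ, ∑' j : ℕ, F (j,k) = term q 0 k x := by
    intro k
    have h1 : ∑' j : ℕ, F (j,k) = (q ^ (x*((k:ℝ)+1)) / ((k:ℝ)+1)) * ∑' j : ℕ, ((q^(k+1) : ℝ)) ^ j := by
      rw [← tsum_mul_left]
      exact tsum_congr (fun j => key j k)
    rw [h1, tsum_geometric_of_lt_one (pow_nonneg hq0.le _) (hpow_lt_one hq0 hq1 k),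
      exp_term hq0 k x, w, mul_inv]
    ring
  have swapS : Summable (fun kj : ℕ × ℕ => F (kj.2, kj.1)) := by
    have := (Equiv.prodComm ℕ ℕ).summable_iff (f := F)
    exact this.2 hFs
  calc ∑' j : ℕ, -Real.log (1 - q ^ ((j:ℝ)+x))
      = ∑' j : ℕ, ∑' k : ℕ, F (j,k) := tsum_congr fun j => ((hrow j).tsum_eq).symm
    _ = ∑' jk : ℕ × ℕ, F jk := (Summable.tsum_prod' hFs hrowS).symm
    _ = ∑' kj : ℕ × ℕ, F (kj.2, kj.1) := ((Equiv.prodComm ℕ ℕ).tsum_eq F).symm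
    _ = ∑' k : ℕ, ∑' j : ℕ, F (j,k) := Summable.tsum_prod' swapS (fun k => hcolS k)
    _ = ∑' k : ℕ, term q 0 k x := tsum_congr hcol

lemma qGamma_eq {x : ℝ} (hx : 0 < x) :
    qGamma q x = (1 - q) ^ (1 - x) *
      Real.exp (∑' j : ℕ, Real.log ((1 - q ^ (j+1)) / (1 - q ^ ((j:ℝ)+x)))) := by
  have hnum : ∀ j : ℕ, 0 < 1 - q ^ (j+1) := fun j => by linarith [hpow_lt_one hq0 hq1 j]
  have hden : ∀ j : ℕ, 0 < 1 - q ^ ((j:ℝ)+x) := fun j => by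
    have : q ^ ((j:ℝ)+x) < 1 := rpow_lt_one' hq0 hq1 (by positivity)
    linarith
  have hlogdiv : ∀ j : ℕ, Real.log ((1 - q ^ (j+1)) / (1 - q ^ ((j:ℝ)+x)))
      = Real.log (1 - q ^ (j+1)) - Real.log (1 - q ^ ((j:ℝ)+x)) :=
    fun j => Real.log_div (hnum j).ne' (hden j).ne'
  have hsl : Summable (fun j : ℕ => Real.log ((1 - q ^ (j+1)) / (1 - q ^ ((j:ℝ)+x)))) :=
    (((S1 hq0 hq1).sub (S2 hq0 hq1 hx))).congr (fun j => (hlogdiv j).symm)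
  have hprod := Real.rexp_tsum_eq_tprod
    (f := fun (j : ℕ) => (1 - q ^ (j+1)) / (1 - q ^ ((j:ℝ)+x)))
    (fun j => div_pos (hnum j) (hden j)) hsl
  rw [qGamma, ← hprod]

lemma qGamma_pos {x : ℝ} (hx : 0 < x) : 0 < qGamma q x := by
  rw [qGamma_eq hq0 hq1 hx]
  have h1 : (0:ℝ) < 1 - q := by linarith
  positivity

lemma log_qGamma {x : ℝ} (hx : 0 < x) : Real.log (qGamma q x) = G q 0 x := by
  have hnum : ∀ j : ℕ, 0 < 1 - q ^ (j+1) := fun j => by linarith [hpow_lt_one hq0 hq1 j]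
  have hden : ∀ j : ℕ, 0 < 1 - q ^ ((j:ℝ)+x) := fun j => by
    have : q ^ ((j:ℝ)+x) < 1 := rpow_lt_one' hq0 hq1 (by positivity)
    linarith
  have hlogdiv : ∀ j : ℕ, Real.log ((1 - q ^ (j+1)) / (1 - q ^ ((j:ℝ)+x)))
      = Real.log (1 - q ^ (j+1)) - Real.log (1 - q ^ ((j:ℝ)+x)) :=
    fun j => Real.log_div (hnum j).ne' (hden j).ne'
  have h1 : (0:ℝ) < 1 - q := by linarith
  rw [qGamma_eq hq0 hq1 hx, Real.log_mul (by positivity) (Real.exp_pos _).ne',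
    Real.log_rpow h1, Real.log_exp]
  have h2 : ∑' j : ℕ, Real.log ((1 - q ^ (j+1)) / (1 - q ^ ((j:ℝ)+x)))
      = (∑' j : ℕ, Real.log (1 - q ^ (j+1))) - ∑' j : ℕ, Real.log (1 - q ^ ((j:ℝ)+x)) := by
    rw [← Summable.tsum_sub (S1 hq0 hq1) (S2 hq0 hq1 hx)]
    exact tsum_congr hlogdiv
  rw [h2, G]
  norm_num
  have h3 : -∑' j : ℕ, Real.log (1 - q ^ ((j:ℝ)+x)) = ∑' k : ℕ, term q 0 k x := by
    rw [← tail_eq hq0 hq1 hx, tsum_neg]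
  linarith [h3]

lemma term_one_eq (k : ℕ) (x : ℝ) :
    term q 1 k x = Real.log q * (q ^ (((k:ℝ)+1)*x) / (1 - q ^ (k+1))) := by
  have harg : c q k * x = Real.log q * (((k:ℝ)+1)*x) := by rw [c]; ring
  have hk : ((k:ℝ)+1) ≠ 0 := by positivity
  have hden : (1 - q ^ (k+1)) ≠ 0 := by
    have := hpow_lt_one hq0 hq1 k
    intro h; rw [sub_eq_zero] at h; linarith
  rw [term, pow_one, harg, w, c, Real.rpow_def_of_pos hq0]
  field_simp

lemma G1_eq_qDigamma {x : ℝ} (hx : 0 < x) : G q 1 x = qDigamma q x := by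
  rw [G, qDigamma]
  norm_num
  rw [← tsum_mul_left]
  exact tsum_congr (fun k => term_one_eq hq0 hq1 k x)

lemma S_summable {x : ℝ} (hx : 0 < x) :
    Summable (fun k : ℕ => q ^ (((k:ℝ)+1)*x) / (1 - q ^ (k+1))) := by
  have hq' : (0:ℝ) < 1 - q := by linarith
  apply Summable.of_nonneg_of_le (fun k => ?_) (fun k => ?_)
    (((sum_master hq0 hq1 0 hx).mul_left ((1-q)⁻¹)))
  · have h1 := hpow_lt_one hq0 hq1 k
    have h2 : (0:ℝ) ≤ q ^ (((k:ℝ)+1)*x) := (Real.rpow_pos_of_pos hq0 _).le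
    have h3 : (0:ℝ) < 1 - q ^ (k+1) := by linarith
    positivity
  · have h1 := hpow_lt_one hq0 hq1 k
    have h3 : (0:ℝ) < 1 - q ^ (k+1) := by linarith
    have h4 : q ^ (((k:ℝ)+1)*x) = Real.exp (c q k * x) := by
      rw [Real.rpow_def_of_pos hq0, c]; congr 1; ring
    have h5 : (1 - q ^ (k+1))⁻¹ ≤ (1-q)⁻¹ := by
      apply inv_anti₀ hq'
      have : q ^ (k+1) ≤ q := by
        calc q ^ (k+1) ≤ q ^ 1 := pow_le_pow_of_le_one hq0.le hq1.le (by omega)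
        _ = q := pow_one q
      linarith
    rw [h4, div_eq_mul_inv, pow_zero, one_mul]
    calc Real.exp (c q k * x) * (1 - q ^ (k+1))⁻¹
        ≤ Real.exp (c q k * x) * (1-q)⁻¹ :=
          mul_le_mul_of_nonneg_left h5 (Real.exp_pos _).le
      _ = (1-q)⁻¹ * Real.exp (c q k * x) := mul_comm _ _

lemma qDigamma_lt {x y : ℝ} (hx : 0 < x) (hxy : x < y) :
    qDigamma q x < qDigamma q y := by
  have hy : 0 < y := lt_trans hx hxy
  have hS : ∑' k : ℕ, q ^ (((k:ℝ)+1)*y) / (1 - q ^ (k+1))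
      < ∑' k : ℕ, q ^ (((k:ℝ)+1)*x) / (1 - q ^ (k+1)) := by
    have hle : ∀ k : ℕ, q ^ (((k:ℝ)+1)*y) / (1 - q ^ (k+1))
        ≤ q ^ (((k:ℝ)+1)*x) / (1 - q ^ (k+1)) := by
      intro k
      have h1 := hpow_lt_one hq0 hq1 k
      have h3 : (0:ℝ) < 1 - q ^ (k+1) := by linarith
      have hnum : q ^ (((k:ℝ)+1)*y) < q ^ (((k:ℝ)+1)*x) :=
        Real.rpow_lt_rpow_of_exponent_gt hq0 hq1 (by nlinarith [Nat.cast_nonneg (α := ℝ) k])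
      exact (div_lt_div_iff_of_pos_right h3).2 hnum |>.le
    refine Summable.tsum_lt_tsum (i := 0) hle ?_ (S_summable hq0 hq1 hy) (S_summable hq0 hq1 hx)
    · show q ^ ((((0:ℕ):ℝ)+1)*y) / (1 - q ^ (0+1)) < q ^ ((((0:ℕ):ℝ)+1)*x) / (1 - q ^ (0+1))
      have h1 := hpow_lt_one hq0 hq1 0
      have h3 : (0:ℝ) < 1 - q ^ (0+1) := by linarith
      have hnum : q ^ ((((0:ℕ):ℝ)+1)*y) < q ^ ((((0:ℕ):ℝ)+1)*x) :=
        Real.rpow_lt_rpow_of_exponent_gt hq0 hq1 (by norm_num; linarith)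
      exact (div_lt_div_iff_of_pos_right h3).2 hnum
  have := mul_lt_mul_of_neg_left hS (hlq hq0 hq1)
  rw [qDigamma, qDigamma]
  linarith

lemma G_eq_tail {n : ℕ} (hn : 2 ≤ n) : G q n = fun x => ∑' k : ℕ, term q n k x := by
  funext x
  have h1 : n ≠ 0 := by omega
  have h2 : n ≠ 1 := by omega
  simp [G, h1, h2]

omit hq1 in
lemma neg_pow_term (n k : ℕ) (x : ℝ) :
    (-1:ℝ)^n * term q n k x = (-(c q k))^n * Real.exp (c q k * x) * w q k := by
  rw [term, neg_pow (c q k)]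
  ring

lemma G_sign {n : ℕ} (hn : 2 ≤ n) {x : ℝ} (hx : 0 < x) :
    0 ≤ (-1:ℝ)^n * G q n x := by
  rw [G_eq_tail hq0 hq1 hn, ← tsum_mul_left]
  apply tsum_nonneg
  intro k
  rw [neg_pow_term hq0 n k x]
  have h1 : (0:ℝ) ≤ -(c q k) := by linarith [hc_neg hq0 hq1 k]
  exact mul_nonneg (mul_nonneg (pow_nonneg h1 n) (Real.exp_pos _).le) (hw_pos hq0 hq1 k).le



/-- complex extension of G 0 -/
noncomputable def Hc (q : ℝ) (z : ℂ) : ℂ :=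
  (1 - z) * (Real.log (1-q) : ℂ) + ((∑' j : ℕ, Real.log (1 - q ^ (j+1)) : ℝ) : ℂ)
    + ∑' k : ℕ, Complex.exp ((c q k : ℂ) * z) * ((w q k : ℝ) : ℂ)

lemma Hc_term_summable {z : ℂ} (hz : 0 < z.re) :
    Summable (fun k : ℕ => Complex.exp ((c q k : ℂ) * z) * ((w q k : ℝ) : ℂ)) := by
  apply Summable.of_norm
  have hsum : Summable (fun k : ℕ => Real.exp (c q k * z.re) * w q k) := by
    apply Summable.of_nonneg_of_le
      (fun k => mul_nonneg (Real.exp_pos _).le (hw_pos hq0 hq1 k).le) (fun k => ?_)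
      (((sum_master hq0 hq1 0 hz).mul_left ((1-q)⁻¹)))
    rw [pow_zero, one_mul]
    calc Real.exp (c q k * z.re) * w q k ≤ Real.exp (c q k * z.re) * (1-q)⁻¹ :=
          mul_le_mul_of_nonneg_left (hw_le hq0 hq1 k) (Real.exp_pos _).le
      _ = (1-q)⁻¹ * Real.exp (c q k * z.re) := mul_comm _ _
  apply hsum.congr
  intro k
  rw [norm_mul, Complex.norm_exp]
  rw [show ((c q k : ℂ) * z).re = c q k * z.re by simp [Complex.mul_re]]
  simp [Complex.norm_real, Real.norm_eq_abs, abs_of_pos (hw_pos hq0 hq1 k)]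

lemma Hc_differentiableAt {z : ℂ} (hz : 0 < z.re) : DifferentiableAt ℂ (Hc q) z := by
  have h2 : 0 < z.re / 2 := by linarith
  set T : Set ℂ := Complex.re ⁻¹' Set.Ioi (z.re/2) with hT
  have hTopen : IsOpen T := IsOpen.preimage Complex.continuous_re isOpen_Ioi
  have hTpre : IsPreconnected T := (convex_halfSpace_re_gt (z.re/2)).isPreconnected
  have hzT : z ∈ T := by simp [hT, Set.mem_Ioi]; linarith
  have htsum : HasDerivAt (fun ζ : ℂ => ∑' k : ℕ, Complex.exp ((c q k : ℂ) * ζ) * ((w q k : ℝ) : ℂ))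
      (∑' k : ℕ, (c q k : ℂ) * Complex.exp ((c q k : ℂ) * z) * ((w q k : ℝ) : ℂ)) z := by
    refine hasDerivAt_tsum_of_isPreconnected
      (g := fun (k : ℕ) (ζ : ℂ) => Complex.exp ((c q k : ℂ) * ζ) * ((w q k : ℝ) : ℂ))
      (g' := fun (k : ℕ) (ζ : ℂ) => (c q k : ℂ) * Complex.exp ((c q k : ℂ) * ζ) * ((w q k : ℝ) : ℂ))
      (t := T)
      (u := fun k : ℕ => (|Real.log q| * (1 - q)⁻¹) *
        (((k : ℝ) + 1) ^ 1 * Real.exp (c q k * (z.re/2))))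
      (((sum_master hq0 hq1 1 h2).mul_left _)) hTopen hTpre
      (fun k ζ _ => ?_) (fun k ζ hζ => ?_) hzT (Hc_term_summable hq0 hq1 hz) hzT
    · have h1 : HasDerivAt (fun ζ : ℂ => (c q k : ℂ) * ζ) ((c q k : ℂ)) ζ := by
        simpa using (hasDerivAt_id ζ).const_mul ((c q k : ℂ))
      simpa [mul_comm] using (h1.cexp).mul_const ((w q k : ℝ) : ℂ)
    · have hwre : z.re / 2 ≤ ζ.re := hζ.le
      have hck := hc_neg hq0 hq1 k
      have hnorm : ‖(c q k : ℂ) * Complex.exp ((c q k : ℂ) * ζ) * ((w q k : ℝ) : ℂ)‖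
          = |c q k| * Real.exp (c q k * ζ.re) * QG.w q k := by
        rw [norm_mul, norm_mul, Complex.norm_exp]
        simp [Complex.norm_real, abs_of_pos (hw_pos hq0 hq1 k)]
      rw [hnorm]
      have hce : |c q k| = ((k:ℝ)+1) * |Real.log q| := by
        rw [c, abs_mul, abs_of_pos (show (0:ℝ) < (k:ℝ)+1 by positivity)]
      have hexp : Real.exp (c q k * ζ.re) ≤ Real.exp (c q k * (z.re/2)) := by
        apply Real.exp_le_exp.2
        nlinarith
      calc |c q k| * Real.exp (c q k * ζ.re) * QG.w q k
          ≤ |c q k| * Real.exp (c q k * (z.re/2)) * (1-q)⁻¹ := by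
            apply mul_le_mul (mul_le_mul_of_nonneg_left hexp (abs_nonneg _))
              (hw_le hq0 hq1 k) (hw_pos hq0 hq1 k).le (by positivity)
        _ = (|Real.log q| * (1 - q)⁻¹) * (((k : ℝ) + 1) ^ 1 * Real.exp (c q k * (z.re/2))) := by
            rw [hce]; ring
  have hlin : DifferentiableAt ℂ (fun z : ℂ => (1 - z) * (Real.log (1-q) : ℂ)
      + ((∑' j : ℕ, Real.log (1 - q ^ (j+1)) : ℝ) : ℂ)) z := by
    fun_prop
  have heq : Hc q = fun z : ℂ => ((1 - z) * (Real.log (1-q) : ℂ)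
      + ((∑' j : ℕ, Real.log (1 - q ^ (j+1)) : ℝ) : ℂ))
      + ∑' k : ℕ, Complex.exp ((c q k : ℂ) * z) * ((w q k : ℝ) : ℂ) := rfl
  rw [heq]
  exact hlin.add htsum.differentiableAt

lemma Hc_analytic : AnalyticOnNhd ℂ (Hc q) {z : ℂ | 0 < z.re} := by
  apply DifferentiableOn.analyticOnNhd (fun z hz => (Hc_differentiableAt hq0 hq1 hz).differentiableWithinAt)
  exact IsOpen.preimage Complex.continuous_re isOpen_Ioi

lemma Hc_real {x : ℝ} : Hc q (x : ℂ) = ((G q 0 x : ℝ) : ℂ) := by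
  rw [Hc, G]
  simp only [if_pos rfl]
  push_cast
  congr 1
  apply tsum_congr
  intro k
  rw [term, pow_zero, one_mul]
  push_cast [Complex.ofReal_exp]
  ring

lemma G0_analytic : AnalyticOnNhd ℝ (G q 0) (Set.Ioi (0:ℝ)) := by
  have h1 : AnalyticOnNhd ℝ (fun x : ℝ => (Complex.reCLM) (Hc q (Complex.ofRealCLM x)))
      (Set.Ioi (0:ℝ)) := by
    apply AnalyticOnNhd.comp (Complex.reCLM.analyticOnNhd Set.univ)
    · apply AnalyticOnNhd.comp ((Hc_analytic hq0 hq1).restrictScalars)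
        (Complex.ofRealCLM.analyticOnNhd _)
      intro x hx
      simpa using hx
    · intro x _
      trivial
  apply h1.congr isOpen_Ioi
  intro x _
  show (Hc q (x : ℂ)).re = G q 0 x
  rw [Hc_real hq0 hq1]
  exact Complex.ofReal_re _

lemma logGamma_analytic : AnalyticOnNhd ℝ (fun y => Real.log (qGamma q y)) (Set.Ioi (0:ℝ)) := by
  apply (G0_analytic hq0 hq1).congr isOpen_Ioi
  intro x hx
  exact (log_qGamma hq0 hq1 hx).symm


end QG

theorem stmt11 (q x₀ : ℝ) (hq0 : 0 < q) (hq1 : q < 1)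
    (hx₀ : 0 < x₀) (hzero : qDigamma q x₀ = 0)
    (huniq : ∀ y : ℝ, 0 < y → qDigamma q y = 0 → y = x₀) :
    LogCompletelyMonotonicOn (qGamma q) (Set.Ioo 0 x₀) := by
  have hsub : Set.Ioo (0:ℝ) x₀ ⊆ Set.Ioi 0 := fun y hy => hy.1
  refine ⟨fun x hx => QG.qGamma_pos hq0 hq1 hx.1, ?_, ?_⟩
  · exact ((QG.logGamma_analytic hq0 hq1).mono hsub).contDiffOn isOpen_Ioo.uniqueDiffOn
  · intro n hn x hx
    have hx0 : 0 < x := hx.1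
    have hev : (fun y => Real.log (qGamma q y)) =ᶠ[nhds x] QG.G q 0 := by
      filter_upwards [isOpen_Ioi.mem_nhds (show x ∈ Set.Ioi (0:ℝ) from hx0)] with y hy
      exact QG.log_qGamma hq0 hq1 hy
    rw [Filter.EventuallyEq.iteratedDeriv_eq n hev, QG.iteratedDeriv_G hq0 hq1 n hx0]
    rcases eq_or_lt_of_le hn with h1 | h2
    · rw [← h1, QG.G1_eq_qDigamma hq0 hq1 hx0]
      have hlt : qDigamma q x < 0 := by
        rw [← hzero]
        exact QG.qDigamma_lt hq0 hq1 hx0 hx.2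
      simp only [pow_one]
      linarith
    · exact QG.G_sign hq0 hq1 h2 hx0
end

section
/- Let 0<q<1. Then for all x,y ∈ (0,1) one has Γ_q(x+1)·Γ_q(y+1) ≤ Γ_q(x+y+2). -/
open Real Filter Finset

namespace QGA

/-- The general factor `(1-q^{j+b})/(1-q^{j+a})`. -/
noncomputable def G (q b a : ℝ) (j : ℕ) : ℝ :=
  (1 - q ^ ((j : ℝ) + b)) / (1 - q ^ ((j : ℝ) + a))

variable {q : ℝ}

lemma rpow_lt_one' (hq0 : 0 < q) (hq1 : q < 1) {r : ℝ} (hr : 0 < r) : q ^ r < 1 :=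
  Real.rpow_lt_one hq0.le hq1 hr

lemma one_sub_rpow_pos (hq0 : 0 < q) (hq1 : q < 1) {r : ℝ} (hr : 0 < r) : 0 < 1 - q ^ r :=
  sub_pos.mpr (rpow_lt_one' hq0 hq1 hr)

lemma rpow_nat_add (hq0 : 0 < q) (j : ℕ) (c : ℝ) :
    q ^ ((j : ℝ) + c) = q ^ c * q ^ j := by
  rw [Real.rpow_add hq0, Real.rpow_natCast, mul_comm]

lemma G_pos (hq0 : 0 < q) (hq1 : q < 1) {a b : ℝ} (ha : 0 < a) (hb : 0 < b) (j : ℕ) :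
    0 < G q b a j := by
  have h1 : 0 < 1 - q ^ ((j : ℝ) + b) :=
    one_sub_rpow_pos hq0 hq1 (by positivity)
  have h2 : 0 < 1 - q ^ ((j : ℝ) + a) :=
    one_sub_rpow_pos hq0 hq1 (by positivity)
  exact div_pos h1 h2

lemma summable_abs_log_G (hq0 : 0 < q) (hq1 : q < 1) {a b : ℝ} (ha : 0 < a) (hb : 0 < b) :
    Summable fun j : ℕ => |Real.log (G q b a j)| := by
  set m := min a b with hm
  have hm0 : 0 < m := lt_min ha hb
  set K := q ^ m with hK
  have hK0 : 0 < K := Real.rpow_pos_of_pos hq0 m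
  have hK1 : K < 1 := rpow_lt_one' hq0 hq1 hm0
  have h1K : 0 < 1 - K := sub_pos.mpr hK1
  refine Summable.of_nonneg_of_le (fun j => abs_nonneg _) ?_
    ((summable_geometric_of_lt_one hq0.le hq1).mul_left ((1 - K)⁻¹))
  intro j
  set u := q ^ ((j : ℝ) + a) with hu
  set v := q ^ ((j : ℝ) + b) with hv
  have hqj1 : (q : ℝ) ^ j ≤ 1 := pow_le_one₀ hq0.le hq1.le
  have hqj0 : (0 : ℝ) < q ^ j := pow_pos hq0 j
  have hub : u ≤ K * q ^ j := by
    rw [hu, rpow_nat_add hq0]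
    exact mul_le_mul_of_nonneg_right
      (Real.rpow_le_rpow_of_exponent_ge hq0 hq1.le (min_le_left a b)) hqj0.le
  have hvb : v ≤ K * q ^ j := by
    rw [hv, rpow_nat_add hq0]
    exact mul_le_mul_of_nonneg_right
      (Real.rpow_le_rpow_of_exponent_ge hq0 hq1.le (min_le_right a b)) hqj0.le
  have hu0 : 0 < u := Real.rpow_pos_of_pos hq0 _
  have hv0 : 0 < v := Real.rpow_pos_of_pos hq0 _
  have hKq : K * q ^ j ≤ K := by nlinarith
  have h1u : 1 - K ≤ 1 - u := by nlinarith
  have h1v : 1 - K ≤ 1 - v := by nlinarith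
  have h1u0 : 0 < 1 - u := lt_of_lt_of_le h1K h1u
  have h1v0 : 0 < 1 - v := lt_of_lt_of_le h1K h1v
  have ht0 : 0 < G q b a j := G_pos hq0 hq1 ha hb j
  have hGdef : G q b a j = (1 - v) / (1 - u) := rfl
  have hbound : ∀ w z : ℝ, 0 < 1 - w → 1 - K ≤ 1 - w → w ≤ K * q ^ j → 0 < z →
      (1 - z) / (1 - w) - 1 ≤ (1 - K)⁻¹ * q ^ j := by
    intro w z hw hwK hz hz0
    have : (1 - z) / (1 - w) - 1 = (w - z) / (1 - w) := by field_simp; ring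
    rw [this]
    have hnum : w - z ≤ q ^ j := by nlinarith [hz0, hz, hK1, hqj0]
    calc (w - z) / (1 - w) ≤ q ^ j / (1 - K) :=
          div_le_div₀ (le_of_lt hqj0) hnum h1K hwK
      _ = (1 - K)⁻¹ * q ^ j := by ring
  rcases le_or_gt 1 (G q b a j) with h | h
  · rw [abs_of_nonneg (Real.log_nonneg h)]
    calc Real.log (G q b a j) ≤ G q b a j - 1 := Real.log_le_sub_one_of_pos ht0
      _ ≤ (1 - K)⁻¹ * q ^ j := by
          rw [hGdef]; exact hbound u v h1u0 h1u hub hv0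
  · rw [abs_of_neg (Real.log_neg ht0 h), ← Real.log_inv]
    have hinv : (G q b a j)⁻¹ = (1 - u) / (1 - v) := by
      rw [hGdef]; rw [inv_div]
    calc Real.log (G q b a j)⁻¹ ≤ (G q b a j)⁻¹ - 1 :=
          Real.log_le_sub_one_of_pos (by positivity)
      _ ≤ (1 - K)⁻¹ * q ^ j := by
          rw [hinv]; exact hbound v u h1v0 h1v hvb hu0

lemma hasProd_G (hq0 : 0 < q) (hq1 : q < 1) {a b : ℝ} (ha : 0 < a) (hb : 0 < b) :
    HasProd (G q b a) (Real.exp (∑' j : ℕ, Real.log (G q b a j))) := by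
  have hs : Summable fun j : ℕ => Real.log (G q b a j) :=
    (summable_abs_log_G hq0 hq1 ha hb).of_abs
  have h := hs.hasSum.rexp
  have he : (rexp ∘ fun j : ℕ => Real.log (G q b a j)) = G q b a :=
    funext fun j => Real.exp_log (G_pos hq0 hq1 ha hb j)
  rwa [he] at h

lemma multipliable_G (hq0 : 0 < q) (hq1 : q < 1) {a b : ℝ} (ha : 0 < a) (hb : 0 < b) :
    Multipliable (G q b a) := ⟨_, hasProd_G hq0 hq1 ha hb⟩

lemma tprod_G_pos (hq0 : 0 < q) (hq1 : q < 1) {a b : ℝ} (ha : 0 < a) (hb : 0 < b) :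
    0 < ∏' j : ℕ, G q b a j := by
  rw [(hasProd_G hq0 hq1 ha hb).tprod_eq]
  exact Real.exp_pos _

lemma hasProd_le_nonneg {f g : ℕ → ℝ} {A B : ℝ} (h0 : ∀ i, 0 ≤ f i) (h : ∀ i, f i ≤ g i)
    (hf : HasProd f A) (hg : HasProd g B) : A ≤ B :=
  le_of_tendsto_of_tendsto' hf hg fun _s =>
    Finset.prod_le_prod (fun i _ => h0 i) fun i _ => h i

lemma partial_prod (hq0 : 0 < q) (hq1 : q < 1) {s : ℝ} (hs : 0 < s) (n : ℕ) :
    ∏ i ∈ range n, G q s (s + 1) i = (1 - q ^ s) / (1 - q ^ ((n : ℝ) + s)) := by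
  induction n with
  | zero => simp [div_self (ne_of_gt (one_sub_rpow_pos hq0 hq1 hs))]
  | succ n ih =>
      rw [prod_range_succ, ih]
      have h1 : (1 : ℝ) - q ^ ((n : ℝ) + s) ≠ 0 :=
        ne_of_gt (one_sub_rpow_pos hq0 hq1 (by positivity))
      have h2 : (1 : ℝ) - q ^ ((n : ℝ) + (s + 1)) ≠ 0 :=
        ne_of_gt (one_sub_rpow_pos hq0 hq1 (by positivity))
      have h3 : ((n + 1 : ℕ) : ℝ) + s = (n : ℝ) + (s + 1) := by push_cast; ring
      rw [h3, G]
      field_simp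

lemma telescope (hq0 : 0 < q) (hq1 : q < 1) {s : ℝ} (hs : 0 < s) :
    HasProd (G q s (s + 1)) (1 - q ^ s) := by
  have hm : Multipliable (G q s (s + 1)) := multipliable_G hq0 hq1 (by positivity) hs
  rw [hm.hasProd_iff_tendsto_nat]
  have he : (fun n : ℕ => ∏ i ∈ range n, G q s (s + 1) i)
      = fun n : ℕ => (1 - q ^ s) / (1 - q ^ s * q ^ n) := by
    funext n
    rw [partial_prod hq0 hq1 hs n, rpow_nat_add hq0]
  rw [he]
  have h0 : Tendsto (fun n : ℕ => (q : ℝ) ^ n) atTop (nhds 0) :=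
    tendsto_pow_atTop_nhds_zero_of_lt_one hq0.le hq1
  have h : Tendsto (fun n : ℕ => (1 - q ^ s) / (1 - q ^ s * q ^ n)) atTop
      (nhds ((1 - q ^ s) / (1 - q ^ s * 0))) :=
    tendsto_const_nhds.div (tendsto_const_nhds.sub (h0.const_mul _)) (by norm_num)
  simpa using h

end QGA

open QGA
theorem stmt12 (q : ℝ) (hq0 : 0 < q) (hq1 : q < 1) :
    ∀ x y : ℝ, x ∈ Set.Ioo (0 : ℝ) 1 → y ∈ Set.Ioo (0 : ℝ) 1 →
      qGamma q (x + 1) * qGamma q (y + 1) ≤ qGamma q (x + y + 2) := by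
  intro x y hx hy
  obtain ⟨hx0, hx1⟩ := hx
  obtain ⟨hy0, hy1⟩ := hy
  have ht : (0 : ℝ) < 1 - q := by linarith
  have hfun : ∀ a : ℝ,
      (fun j : ℕ => (1 - q ^ (j + 1)) / (1 - q ^ ((j : ℝ) + a))) = G q 1 a := by
    intro a; funext j
    rw [G, rpow_nat_add hq0 j 1, Real.rpow_one, pow_succ]
    ring_nf
  rw [show x + y + 2 = x + y + 1 + 1 by ring]
  simp only [qGamma]
  rw [hfun (x + 1), hfun (y + 1), hfun (x + y + 1 + 1)]
  have hxp : (0 : ℝ) < x + 1 := by linarith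
  have hyp : (0 : ℝ) < y + 1 := by linarith
  have hsp : (0 : ℝ) < x + y + 1 := by linarith
  have m1 : Multipliable (G q 1 (x + 1)) := multipliable_G hq0 hq1 hxp one_pos
  have m2 : Multipliable (G q 1 (y + 1)) := multipliable_G hq0 hq1 hyp one_pos
  have m3 : Multipliable (G q 1 (x + y + 1)) := multipliable_G hq0 hq1 hsp one_pos
  have hPc : 0 < ∏' j : ℕ, G q 1 (x + y + 1) j := tprod_G_pos hq0 hq1 hsp one_pos
  -- pointwise inequality
  have hpt : ∀ j : ℕ, G q 1 (x + 1) j * G q 1 (y + 1) j ≤ G q 1 (x + y + 1) j := by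
    intro j
    have hc0 : 0 < q ^ ((j : ℝ) + 1) := Real.rpow_pos_of_pos hq0 _
    have hc1 : q ^ ((j : ℝ) + 1) < 1 := rpow_lt_one' hq0 hq1 (by positivity)
    have hα0 : 0 < q ^ x := Real.rpow_pos_of_pos hq0 _
    have hα1 : q ^ x < 1 := rpow_lt_one' hq0 hq1 hx0
    have hβ0 : 0 < q ^ y := Real.rpow_pos_of_pos hq0 _
    have hβ1 : q ^ y < 1 := rpow_lt_one' hq0 hq1 hy0
    have e1 : q ^ ((j : ℝ) + (x + 1)) = q ^ ((j : ℝ) + 1) * q ^ x := by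
      rw [show (j : ℝ) + (x + 1) = ((j : ℝ) + 1) + x by ring,
        Real.rpow_add hq0 ((j : ℝ) + 1) x]
    have e2 : q ^ ((j : ℝ) + (y + 1)) = q ^ ((j : ℝ) + 1) * q ^ y := by
      rw [show (j : ℝ) + (y + 1) = ((j : ℝ) + 1) + y by ring,
        Real.rpow_add hq0 ((j : ℝ) + 1) y]
    have e3 : q ^ ((j : ℝ) + (x + y + 1)) = q ^ ((j : ℝ) + 1) * (q ^ x * q ^ y) := by
      rw [show (j : ℝ) + (x + y + 1) = (((j : ℝ) + 1) + x) + y by ring,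
        Real.rpow_add hq0 (((j : ℝ) + 1) + x) y, Real.rpow_add hq0 ((j : ℝ) + 1) x]
      ring
    rw [G, G, G, e1, e2, e3]
    set c := q ^ ((j : ℝ) + 1) with hc
    have d1 : 0 < 1 - c * q ^ x := by nlinarith
    have d2 : 0 < 1 - c * q ^ y := by nlinarith
    have d3 : 0 < 1 - c * (q ^ x * q ^ y) := by nlinarith
    rw [div_mul_div_comm, div_le_div_iff₀ (by positivity) d3]
    nlinarith [mul_nonneg (mul_nonneg (mul_nonneg (sub_nonneg.mpr hc1.le) hc0.le)
      (sub_nonneg.mpr hα1.le)) (sub_nonneg.mpr hβ1.le)]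
  have hAB : (∏' j : ℕ, G q 1 (x + 1) j) * (∏' j : ℕ, G q 1 (y + 1) j)
      ≤ ∏' j : ℕ, G q 1 (x + y + 1) j :=
    hasProd_le_nonneg
      (fun j => (mul_pos (G_pos hq0 hq1 hxp one_pos j) (G_pos hq0 hq1 hyp one_pos j)).le)
      hpt (m1.hasProd.mul m2.hasProd) m3.hasProd
  -- splitting off the telescoping factor
  have hkey : G q 1 (x + y + 1 + 1)
      = fun j : ℕ => G q 1 (x + y + 1) j * G q (x + y + 1) (x + y + 1 + 1) j := by
    funext j
    simp only [G]
    have h1 : (1 : ℝ) - q ^ ((j : ℝ) + (x + y + 1)) ≠ 0 :=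
      ne_of_gt (one_sub_rpow_pos hq0 hq1 (by positivity))
    have h2 : (1 : ℝ) - q ^ ((j : ℝ) + (x + y + 1 + 1)) ≠ 0 :=
      ne_of_gt (one_sub_rpow_pos hq0 hq1 (by positivity))
    field_simp
  have hPd : HasProd (G q 1 (x + y + 1 + 1))
      ((∏' j : ℕ, G q 1 (x + y + 1) j) * (1 - q ^ (x + y + 1))) := by
    rw [hkey]
    exact m3.hasProd.mul (telescope hq0 hq1 hsp)
  rw [hPd.tprod_eq]
  -- final arithmetic
  have hqs : q ^ (x + y + 1) ≤ q := by
    calc q ^ (x + y + 1) ≤ q ^ (1 : ℝ) :=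
          Real.rpow_le_rpow_of_exponent_ge hq0 hq1.le (by linarith)
      _ = q := Real.rpow_one q
  have hqs0 : 0 < 1 - q ^ (x + y + 1) := one_sub_rpow_pos hq0 hq1 hsp
  have e1 : (1 - q) ^ (1 - (x + 1)) * (1 - q) ^ (1 - (y + 1))
      = (1 - q) ^ (1 - (x + y + 1 + 1)) * (1 - q) ^ (1 : ℝ) := by
    rw [← Real.rpow_add ht, ← Real.rpow_add ht]
    congr 1
    ring
  rw [Real.rpow_one] at e1
  have hr0 : (0 : ℝ) ≤ (1 - q) ^ (1 - (x + y + 1 + 1)) := (Real.rpow_pos_of_pos ht _).le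
  calc (1 - q) ^ (1 - (x + 1)) * (∏' j : ℕ, G q 1 (x + 1) j)
        * ((1 - q) ^ (1 - (y + 1)) * (∏' j : ℕ, G q 1 (y + 1) j))
      = ((1 - q) ^ (1 - (x + 1)) * (1 - q) ^ (1 - (y + 1)))
        * ((∏' j : ℕ, G q 1 (x + 1) j) * (∏' j : ℕ, G q 1 (y + 1) j)) := by ring
    _ = (1 - q) ^ (1 - (x + y + 1 + 1))
        * ((1 - q) * ((∏' j : ℕ, G q 1 (x + 1) j) * (∏' j : ℕ, G q 1 (y + 1) j))) := by
        rw [e1]; ring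
    _ ≤ (1 - q) ^ (1 - (x + y + 1 + 1))
        * ((1 - q ^ (x + y + 1)) * (∏' j : ℕ, G q 1 (x + y + 1) j)) := by
        apply mul_le_mul_of_nonneg_left _ hr0
        calc (1 - q) * ((∏' j : ℕ, G q 1 (x + 1) j) * (∏' j : ℕ, G q 1 (y + 1) j))
            ≤ (1 - q) * (∏' j : ℕ, G q 1 (x + y + 1) j) :=
              mul_le_mul_of_nonneg_left hAB ht.le
          _ ≤ (1 - q ^ (x + y + 1)) * (∏' j : ℕ, G q 1 (x + y + 1) j) :=
              mul_le_mul_of_nonneg_right (by linarith) hPc.le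
    _ = (1 - q) ^ (1 - (x + y + 1 + 1))
        * ((∏' j : ℕ, G q 1 (x + y + 1) j) * (1 - q ^ (x + y + 1))) := by ring
end

section
/- Let 0<q<1. The q-digamma function ψ_q has a uniquely determined positive zero x₀ = x₀(q), and this zero satisfies x₀ ∈ (1,2). -/
namespace QDaux

variable {q : ℝ}

lemma powlt (hq0 : 0 < q) (hq1 : q < 1) (k : ℕ) : q ^ (k + 1) < 1 :=
  pow_lt_one₀ hq0.le hq1 (Nat.succ_ne_zero k)

lemma denom_pos (hq0 : 0 < q) (hq1 : q < 1) (k : ℕ) : 0 < 1 - q ^ (k + 1) := by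
  linarith [powlt hq0 hq1 k]

lemma term_eq (hq0 : 0 < q) (x : ℝ) (k : ℕ) :
    q ^ (((k : ℝ) + 1) * x) = (q ^ x) ^ (k + 1) := by
  rw [← Real.rpow_natCast (q ^ x) (k + 1), ← Real.rpow_mul hq0.le]
  push_cast
  ring_nf

lemma term_nonneg (hq0 : 0 < q) (hq1 : q < 1) (x : ℝ) (k : ℕ) :
    0 ≤ q ^ (((k : ℝ) + 1) * x) / (1 - q ^ (k + 1)) :=
  div_nonneg (Real.rpow_pos_of_pos hq0 _).le (denom_pos hq0 hq1 k).le

lemma summable_term (hq0 : 0 < q) (hq1 : q < 1) {x : ℝ} (hx : 0 < x) :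
    Summable (fun k : ℕ => q ^ (((k : ℝ) + 1) * x) / (1 - q ^ (k + 1))) := by
  have hqx1 : q ^ x < 1 := Real.rpow_lt_one hq0.le hq1 hx
  have hqx0 : 0 < q ^ x := Real.rpow_pos_of_pos hq0 x
  have hgeo : Summable (fun k : ℕ => (q ^ x) ^ k * ((q ^ x) / (1 - q))) :=
    (summable_geometric_of_lt_one hqx0.le hqx1).mul_right _
  refine Summable.of_nonneg_of_le (term_nonneg hq0 hq1 x) (fun k => ?_) hgeo
  rw [term_eq hq0 x k]
  have h1 : q ^ (k + 1) ≤ q := by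
    calc q ^ (k + 1) ≤ q ^ 1 := pow_le_pow_of_le_one hq0.le hq1.le (by omega)
    _ = q := pow_one q
  have h2 : (1:ℝ) - q ≤ 1 - q ^ (k + 1) := by linarith
  have h3 : (q ^ x) ^ (k + 1) / (1 - q ^ (k + 1)) ≤ (q ^ x) ^ (k + 1) / (1 - q) := by
    apply div_le_div_of_nonneg_left (pow_nonneg hqx0.le _) (by linarith) h2
  calc (q ^ x) ^ (k + 1) / (1 - q ^ (k + 1)) ≤ (q ^ x) ^ (k + 1) / (1 - q) := h3
  _ = (q ^ x) ^ k * ((q ^ x) / (1 - q)) := by rw [pow_succ]; ring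

lemma strictMono (hq0 : 0 < q) (hq1 : q < 1) :
    StrictMonoOn (qDigamma q) (Set.Ioi 0) := by
  intro x hx y hy hxy
  have hlq : Real.log q < 0 := Real.log_neg hq0 hq1
  have hS : (∑' k : ℕ, q ^ (((k : ℝ) + 1) * y) / (1 - q ^ (k + 1)))
      < ∑' k : ℕ, q ^ (((k : ℝ) + 1) * x) / (1 - q ^ (k + 1)) := by
    refine Summable.tsum_lt_tsum (i := 0) (fun k => ?_) ?_ (summable_term hq0 hq1 hy)
      (summable_term hq0 hq1 hx)
    · have hex : ((k : ℝ) + 1) * x < ((k : ℝ) + 1) * y := by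
        have hk : (0:ℝ) < (k : ℝ) + 1 := by positivity
        nlinarith
      exact div_le_div_of_nonneg_right
        (Real.rpow_lt_rpow_of_exponent_gt hq0 hq1 hex).le (denom_pos hq0 hq1 k).le
    · have hlt : q ^ ((((0:ℕ) : ℝ) + 1) * y) < q ^ ((((0:ℕ) : ℝ) + 1) * x) :=
        Real.rpow_lt_rpow_of_exponent_gt hq0 hq1 (by norm_num; linarith)
      exact div_lt_div_of_pos_right hlt (denom_pos hq0 hq1 0)
  unfold qDigamma
  have := mul_lt_mul_of_neg_left hS hlq
  linarith

lemma logser (hq0 : 0 < q) (hq1 : q < 1) :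
    HasSum (fun k : ℕ => q ^ (k + 1) / ((k : ℝ) + 1)) (-Real.log (1 - q)) :=
  Real.hasSum_pow_div_log_of_abs_lt_one (by rw [abs_of_pos hq0]; exact hq1)

/-- term at x = 1 simplifies -/
lemma term_one (hq0 : 0 < q) (k : ℕ) :
    q ^ (((k : ℝ) + 1) * 1) = q ^ (k + 1) := by
  rw [mul_one, ← Real.rpow_natCast q (k + 1)]
  push_cast
  ring_nf

lemma term_two (hq0 : 0 < q) (k : ℕ) :
    q ^ (((k : ℝ) + 1) * 2) = (q ^ (k + 1)) ^ 2 := by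
  rw [← pow_mul, ← Real.rpow_natCast q ((k + 1) * 2)]
  push_cast
  ring_nf

lemma psi_one_neg (hq0 : 0 < q) (hq1 : q < 1) : qDigamma q 1 < 0 := by
  have hlq : Real.log q < 0 := Real.log_neg hq0 hq1
  have hL := logser hq0 hq1
  -- goal: -log(1-q) + log q * S < 0, i.e. ∑ q^{k+1}/(k+1) < ∑ (-log q) * q^{k+1}/(1-q^{k+1})
  have key : (-Real.log (1 - q)) < ∑' k : ℕ, (-Real.log q) * (q ^ (((k : ℝ) + 1) * 1) / (1 - q ^ (k + 1))) := by
    rw [← hL.tsum_eq]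
    have hsum2 : Summable (fun k : ℕ => (-Real.log q) * (q ^ (((k : ℝ) + 1) * 1) / (1 - q ^ (k + 1)))) :=
      (summable_term hq0 hq1 one_pos).mul_left _
    refine Summable.tsum_lt_tsum (i := 0) (fun k => ?_) ?_ hL.summable hsum2
    · -- q^{k+1}/(k+1) ≤ (-log q) * q^{k+1}/(1-q^{k+1})
      rw [term_one hq0]
      have ht0 : 0 < q ^ (k + 1) := pow_pos hq0 _
      have ht1 : q ^ (k + 1) < 1 := powlt hq0 hq1 k
      have hd := denom_pos hq0 hq1 k
      have hlog : Real.log (q ^ (k + 1)) < q ^ (k + 1) - 1 :=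
        Real.log_lt_sub_one_of_pos ht0 (by linarith)
      rw [Real.log_pow] at hlog
      have hk : (0:ℝ) < (k : ℝ) + 1 := by positivity
      rw [← mul_div_assoc, div_le_div_iff₀ hk hd]
      push_cast at hlog ⊢
      nlinarith [mul_lt_mul_of_pos_left hlog ht0]
    · rw [term_one hq0]
      have ht0 : 0 < q ^ (0 + 1) := pow_pos hq0 _
      have ht1 : q ^ (0 + 1) < 1 := powlt hq0 hq1 0
      have hd := denom_pos hq0 hq1 0
      have hlog : Real.log (q ^ (0 + 1)) < q ^ (0 + 1) - 1 :=
        Real.log_lt_sub_one_of_pos ht0 (by linarith)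
      rw [Real.log_pow] at hlog
      rw [← mul_div_assoc, div_lt_div_iff₀ (by norm_num : (0:ℝ) < ((0:ℕ):ℝ) + 1) hd]
      push_cast at hlog ⊢
      nlinarith [mul_lt_mul_of_pos_left hlog ht0]
  rw [tsum_mul_left] at key
  unfold qDigamma
  linarith

lemma psi_two_pos (hq0 : 0 < q) (hq1 : q < 1) : 0 < qDigamma q 2 := by
  have hlq : Real.log q < 0 := Real.log_neg hq0 hq1
  have hL := logser hq0 hq1
  have key : (∑' k : ℕ, (-Real.log q) * (q ^ (((k : ℝ) + 1) * 2) / (1 - q ^ (k + 1))))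
      < -Real.log (1 - q) := by
    rw [← hL.tsum_eq]
    have hsum2 : Summable (fun k : ℕ => (-Real.log q) * (q ^ (((k : ℝ) + 1) * 2) / (1 - q ^ (k + 1)))) :=
      (summable_term hq0 hq1 two_pos).mul_left _
    refine Summable.tsum_lt_tsum (i := 0) (fun k => ?_) ?_ hsum2 hL.summable
    · rw [term_two hq0]
      have ht0 : 0 < q ^ (k + 1) := pow_pos hq0 _
      have ht1 : q ^ (k + 1) < 1 := powlt hq0 hq1 k
      have hd := denom_pos hq0 hq1 k
      -- log(1/t) < 1/t - 1  ⇒  -t log t < 1 - t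
      have hlog : Real.log ((q ^ (k + 1))⁻¹) < (q ^ (k + 1))⁻¹ - 1 :=
        Real.log_lt_sub_one_of_pos (by positivity) (by
          intro h
          rw [inv_eq_one] at h
          linarith)
      rw [Real.log_inv, Real.log_pow] at hlog
      have htl := mul_lt_mul_of_pos_left hlog ht0
      rw [mul_sub, mul_inv_cancel₀ (ne_of_gt ht0)] at htl
      have hk : (0:ℝ) < (k : ℝ) + 1 := by positivity
      rw [← mul_div_assoc, div_le_div_iff₀ hd hk]
      push_cast at htl ⊢
      nlinarith [mul_lt_mul_of_pos_left htl ht0]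
    · rw [term_two hq0]
      have ht0 : 0 < q ^ (0 + 1) := pow_pos hq0 _
      have ht1 : q ^ (0 + 1) < 1 := powlt hq0 hq1 0
      have hd := denom_pos hq0 hq1 0
      have hlog : Real.log ((q ^ (0 + 1))⁻¹) < (q ^ (0 + 1))⁻¹ - 1 :=
        Real.log_lt_sub_one_of_pos (by positivity) (by
          intro h
          rw [inv_eq_one] at h
          linarith)
      rw [Real.log_inv, Real.log_pow] at hlog
      have htl := mul_lt_mul_of_pos_left hlog ht0
      rw [mul_sub, mul_inv_cancel₀ (ne_of_gt ht0)] at htl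
      rw [← mul_div_assoc, div_lt_div_iff₀ hd (by norm_num : (0:ℝ) < ((0:ℕ):ℝ) + 1)]
      push_cast at htl ⊢
      nlinarith [mul_lt_mul_of_pos_left htl ht0]
  rw [tsum_mul_left] at key
  unfold qDigamma
  linarith

lemma continuousOn_psi (hq0 : 0 < q) (hq1 : q < 1) :
    ContinuousOn (qDigamma q) (Set.Icc 1 2) := by
  set F : ℕ → ℝ → ℝ := fun k x => q ^ (((k : ℝ) + 1) * max x 1) / (1 - q ^ (k + 1)) with hF
  have hcont : Continuous fun x => ∑' k : ℕ, F k x := by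
    refine continuous_tsum (u := fun k : ℕ => q ^ (k + 1) / (1 - q)) (fun k => ?_) ?_ ?_
    · have : Continuous fun x : ℝ => q ^ (((k : ℝ) + 1) * max x 1) := by
        have h : ∀ x : ℝ, q ^ (((k : ℝ) + 1) * max x 1)
            = Real.exp ((((k : ℝ) + 1) * max x 1) * Real.log q) := by
          intro x
          rw [Real.rpow_def_of_pos hq0, mul_comm (Real.log q)]
        simp only [h]
        exact Real.continuous_exp.comp (by continuity)
      exact this.div_const _
    · have : Summable (fun k : ℕ => q ^ k * (q / (1 - q))) :=
        (summable_geometric_of_lt_one hq0.le hq1).mul_right _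
      refine this.congr fun k => ?_
      rw [pow_succ]; ring
    · intro k x
      have hd := denom_pos hq0 hq1 k
      have hpos : 0 < q ^ (((k : ℝ) + 1) * max x 1) := Real.rpow_pos_of_pos hq0 _
      rw [Real.norm_eq_abs, abs_of_nonneg (div_nonneg hpos.le hd.le)]
      have h1 : q ^ (((k : ℝ) + 1) * max x 1) ≤ q ^ (k + 1) := by
        rw [← Real.rpow_natCast q (k + 1)]
        refine Real.rpow_le_rpow_of_exponent_ge hq0 hq1.le ?_
        push_cast
        nlinarith [le_max_right x 1, (by positivity : (0:ℝ) < (k:ℝ) + 1)]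
      have h2 : (1:ℝ) - q ≤ 1 - q ^ (k + 1) := by
        have : q ^ (k + 1) ≤ q := by
          calc q ^ (k + 1) ≤ q ^ 1 := pow_le_pow_of_le_one hq0.le hq1.le (by omega)
          _ = q := pow_one q
        linarith
      calc q ^ (((k : ℝ) + 1) * max x 1) / (1 - q ^ (k + 1))
          ≤ q ^ (k + 1) / (1 - q ^ (k + 1)) :=
            div_le_div_of_nonneg_right h1 hd.le
        _ ≤ q ^ (k + 1) / (1 - q) := by
            apply div_le_div_of_nonneg_left (pow_nonneg hq0.le _) (by linarith) h2
  have hpsieq : Set.EqOn (qDigamma q)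
      (fun x => -Real.log (1 - q) + Real.log q * ∑' k : ℕ, F k x) (Set.Icc 1 2) := by
    intro x hx
    have hmax : max x 1 = x := max_eq_left hx.1
    simp only [qDigamma, hF, hmax]
  exact ((continuous_const.add (continuous_const.mul hcont)).continuousOn).congr hpsieq

end QDaux

theorem stmt13 (q : ℝ) (hq0 : 0 < q) (hq1 : q < 1) :
    ∃ x₀ : ℝ, x₀ ∈ Set.Ioo (1 : ℝ) 2 ∧ qDigamma q x₀ = 0 ∧
      ∀ y : ℝ, 0 < y → qDigamma q y = 0 → y = x₀ := by
  have h1 := QDaux.psi_one_neg hq0 hq1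
  have h2 := QDaux.psi_two_pos hq0 hq1
  have hmono := QDaux.strictMono hq0 hq1
  have hivt := intermediate_value_Ioo (by norm_num : (1:ℝ) ≤ 2)
    (QDaux.continuousOn_psi hq0 hq1)
  obtain ⟨x₀, hx₀mem, hx₀⟩ := hivt ⟨h1, h2⟩
  refine ⟨x₀, hx₀mem, hx₀, fun y hy hyz => ?_⟩
  have hx₀pos : (0:ℝ) < x₀ := lt_trans one_pos hx₀mem.1
  exact hmono.injOn hy hx₀pos (by rw [hyz, hx₀])
end

section
/- Let I ⊆ ℝ be an open interval and let f : I → ℝ be a positive function with derivatives of all orders on I. If the derivative f' is completely monotonic on I, then 1/f is logarithmically completely monotonic on I. -/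
open Set Finset


/-- `f` is completely monotonic on `s`: it has derivatives of all orders on `s`
and `(-1)^n f^(n)(x) ≥ 0` for all `x ∈ s` and all `n ≥ 0`. -/
def CompletelyMonotonicOn (f : ℝ → ℝ) (s : Set ℝ) : Prop :=
  ContDiffOn ℝ (⊤ : ℕ∞) f s ∧ ∀ n : ℕ, ∀ x ∈ s, 0 ≤ (-1 : ℝ) ^ n * iteratedDeriv n f x

private lemma itdW_eq_itd {f : ℝ → ℝ} {s : Set ℝ} (hs : IsOpen s) {x : ℝ} (hx : x ∈ s) (n : ℕ) :
    iteratedDerivWithin n f s x = iteratedDeriv n f x := by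
  rw [iteratedDerivWithin_eq_iteratedFDerivWithin, iteratedDeriv_eq_iteratedFDeriv,
    iteratedFDerivWithin_of_isOpen n hs hx]

private lemma binom_shift (a b : ℕ → ℝ) (n : ℕ) :
    ∑ k ∈ Finset.range (n+1), (n.choose k : ℝ) * (a (k+1) * b (n-k) + a k * b (n-k+1)) =
    ∑ k ∈ Finset.range (n+2), ((n+1).choose k : ℝ) * (a k * b (n+1-k)) := by
  rw [Finset.sum_range_succ' (fun k => ((n+1).choose k : ℝ) * (a k * b (n+1-k))) (n+1)]
  have h1 : ∀ k ∈ Finset.range (n+1),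
      (n.choose k : ℝ) * (a (k+1) * b (n-k) + a k * b (n-k+1))
      = (n.choose k : ℝ) * (a (k+1) * b (n-k)) + (n.choose k : ℝ) * (a k * b (n+1-k)) := by
    intro k hk
    have hk' : n - k + 1 = n + 1 - k := by
      have := Finset.mem_range.mp hk; omega
    rw [hk']; ring
  rw [Finset.sum_congr rfl h1, Finset.sum_add_distrib,
    Finset.sum_range_succ' (fun k => (n.choose k : ℝ) * (a k * b (n+1-k))) n]
  have h2 : ∑ k ∈ Finset.range n, (n.choose (k+1) : ℝ) * (a (k+1) * b (n+1-(k+1)))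
      = ∑ k ∈ Finset.range (n+1), (n.choose (k+1) : ℝ) * (a (k+1) * b (n-k)) := by
    rw [Finset.sum_range_succ]
    simp [Nat.choose_succ_self, Nat.succ_sub_succ]
  rw [h2, ← add_assoc, ← Finset.sum_add_distrib]
  have h3 : ∀ k ∈ Finset.range (n+1),
      (n.choose k : ℝ) * (a (k+1) * b (n-k)) + (n.choose (k+1) : ℝ) * (a (k+1) * b (n-k))
      = ((n+1).choose (k+1) : ℝ) * (a (k+1) * b (n+1-(k+1))) := by
    intro k _
    rw [Nat.succ_sub_succ, Nat.choose_succ_succ]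
    push_cast
    ring
  rw [Finset.sum_congr rfl h3]
  simp

private lemma leibniz_within {f g : ℝ → ℝ} {s : Set ℝ} (hs : IsOpen s)
    (hf : ContDiffOn ℝ (⊤ : ℕ∞) f s) (hg : ContDiffOn ℝ (⊤ : ℕ∞) g s) (n : ℕ) :
    ∀ x ∈ s, iteratedDerivWithin n (fun y => f y * g y) s x =
      ∑ k ∈ Finset.range (n + 1), (n.choose k : ℝ) *
        (iteratedDerivWithin k f s x * iteratedDerivWithin (n - k) g s x) := by
  have hu : UniqueDiffOn ℝ s := hs.uniqueDiffOn
  have hdf : ∀ (m : ℕ), DifferentiableOn ℝ (iteratedDerivWithin m f s) s := fun m =>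
    hf.differentiableOn_iteratedDerivWithin (by exact_mod_cast WithTop.coe_lt_top m) hu
  have hdg : ∀ (m : ℕ), DifferentiableOn ℝ (iteratedDerivWithin m g s) s := fun m =>
    hg.differentiableOn_iteratedDerivWithin (by exact_mod_cast WithTop.coe_lt_top m) hu
  induction n with
  | zero => intro x hx; simp
  | succ n IH =>
    intro x hx
    rw [iteratedDerivWithin_succ,
      derivWithin_congr (fun y hy => IH y hy) (IH x hx),
      derivWithin_fun_sum (fun k _ =>
        (((hdf k x hx).fun_mul (hdg (n - k) x hx)).const_mul ((n.choose k : ℝ))))]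
    have hterm : ∀ k ∈ Finset.range (n+1),
        derivWithin (fun y => (n.choose k : ℝ) *
          (iteratedDerivWithin k f s y * iteratedDerivWithin (n-k) g s y)) s x
        = (n.choose k : ℝ) * (iteratedDerivWithin (k+1) f s x * iteratedDerivWithin (n-k) g s x
            + iteratedDerivWithin k f s x * iteratedDerivWithin (n-k+1) g s x) := by
      intro k _
      rw [derivWithin_const_mul _ ((hdf k x hx).fun_mul (hdg (n-k) x hx)),
        derivWithin_fun_mul (hdf k x hx) (hdg (n-k) x hx),
        ← iteratedDerivWithin_succ, ← iteratedDerivWithin_succ]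
    rw [Finset.sum_congr rfl hterm]
    exact binom_shift (fun k => iteratedDerivWithin k f s x)
      (fun k => iteratedDerivWithin k g s x) n

theorem stmt14 (I : Set ℝ) (hIopen : IsOpen I) (hIinterval : I.OrdConnected)
    (f : ℝ → ℝ) (hf : ContDiffOn ℝ (⊤ : ℕ∞) f I) (hpos : ∀ x ∈ I, 0 < f x)
    (hcm : CompletelyMonotonicOn (deriv f) I) :
    LogCompletelyMonotonicOn (fun x => 1 / f x) I := by
  have hu : UniqueDiffOn ℝ I := hIopen.uniqueDiffOn
  have hne : ∀ x ∈ I, f x ≠ 0 := fun x hx => (hpos x hx).ne'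
  set g : ℝ → ℝ := fun y => Real.log (f y) with hg_def
  have hgsm : ContDiffOn ℝ (⊤ : ℕ∞) g I := (hf.of_le (by simp)).log hne
  set v : ℝ → ℝ := derivWithin g I with hv_def
  have hvsm : ContDiffOn ℝ (⊤ : ℕ∞) v I := hgsm.derivWithin hu (by simp)
  have hfsm : ContDiffOn ℝ (⊤ : ℕ∞) f I := hf.of_le (by simp)
  -- v = f'/f on I
  have hgd : ∀ x ∈ I, HasDerivAt g (deriv f x / f x) x := by
    intro x hx
    have hdfa : DifferentiableAt ℝ f x :=
      (hf.contDiffAt (hIopen.mem_nhds hx)).differentiableAt (by simp)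
    exact hdfa.hasDerivAt.log (hne x hx)
  have hveq : ∀ x ∈ I, v x = deriv f x / f x := by
    intro x hx
    rw [hv_def, derivWithin_of_isOpen hIopen hx, (hgd x hx).deriv]
  have heq : Set.EqOn (deriv f) (fun y => f y * v y) I := by
    intro x hx
    simp only [hveq x hx]
    rw [mul_div_assoc']
    exact (mul_div_cancel_left₀ _ (hne x hx)).symm
  -- sign of the derivatives of f (within)
  have hfsign : ∀ m : ℕ, ∀ x ∈ I, 0 ≤ (-1:ℝ)^m * iteratedDerivWithin (m+1) f I x := by
    intro m x hx
    have h := hcm.2 m x hx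
    rwa [itdW_eq_itd hIopen hx, iteratedDeriv_succ', ← hg_def] at *
  -- key claim
  have key : ∀ m : ℕ, ∀ x ∈ I, 0 ≤ (-1:ℝ)^m * iteratedDerivWithin m v I x := by
    intro m
    induction m using Nat.strong_induction_on with
    | _ m IH =>
      intro x hx
      have hL := leibniz_within hIopen hfsm hvsm m x hx
      have hEq : iteratedDerivWithin m (fun y => f y * v y) I x
          = iteratedDerivWithin (m+1) f I x := by
        have e1 : iteratedDerivWithin m (fun y => f y * v y) I x
            = iteratedDerivWithin m (deriv f) I x :=
          (iteratedDerivWithin_congr heq hx).symm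
        have e2 : iteratedDerivWithin m (deriv f) I x
            = iteratedDerivWithin m (derivWithin f I) I x :=
          (iteratedDerivWithin_congr
            (fun y hy => derivWithin_of_isOpen hIopen hy) hx).symm
        exact e1.trans (e2.trans (congrFun iteratedDerivWithin_succ' x).symm)
      rw [hEq] at hL
      rw [Finset.sum_range_succ'] at hL
      simp only [Nat.choose_zero_right, Nat.cast_one, one_mul, Nat.sub_zero,
        iteratedDerivWithin_zero] at hL
      -- hL : ∑ k ∈ range m, C(m,k+1)*(D_{k+1} f * D_{m-(k+1)} v) + f x * D_m v x = D_{m+1} f x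
      have hsum : ∀ k ∈ Finset.range m, (-1:ℝ)^m * ((m.choose (k+1) : ℝ) *
          (iteratedDerivWithin (k+1) f I x * iteratedDerivWithin (m-(k+1)) v I x)) ≤ 0 := by
        intro k hk
        have hkm := Finset.mem_range.mp hk
        have ha := hfsign k x hx
        have hb := IH (m-(k+1)) (by omega) x hx
        have hc : (0:ℝ) ≤ (m.choose (k+1) : ℝ) := Nat.cast_nonneg _
        set j := m - (k+1) with hj
        have hm : (-1:ℝ)^m = -((-1:ℝ)^k * (-1:ℝ)^j) := by
          rw [show m = k + j + 1 by omega, pow_add, pow_add]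
          ring
        rw [hm]
        nlinarith [mul_nonneg ha hb, mul_nonneg hc (mul_nonneg ha hb)]
      have hS : (-1:ℝ)^m * (∑ k ∈ Finset.range m, (m.choose (k+1) : ℝ) *
          (iteratedDerivWithin (k+1) f I x * iteratedDerivWithin (m-(k+1)) v I x)) ≤ 0 := by
        rw [Finset.mul_sum]
        exact Finset.sum_nonpos hsum
      have hP := hfsign m x hx
      have hfx := hpos x hx
      have hmain : 0 ≤ (-1:ℝ)^m * (f x * iteratedDerivWithin m v I x) := by
        have : f x * iteratedDerivWithin m v I x = iteratedDerivWithin (m+1) f I x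
            - ∑ k ∈ Finset.range m, (m.choose (k+1) : ℝ) *
              (iteratedDerivWithin (k+1) f I x * iteratedDerivWithin (m-(k+1)) v I x) := by
          linarith [hL]
        rw [this, mul_sub]
        linarith
      have h2 : 0 ≤ f x * ((-1:ℝ)^m * iteratedDerivWithin m v I x) := by linarith [hmain, mul_comm (f x) ((-1:ℝ)^m * iteratedDerivWithin m v I x)]
      nlinarith [h2, hfx]
  refine ⟨fun x hx => one_div_pos.mpr (hpos x hx), ?_, ?_⟩
  · have hfun : (fun y => Real.log ((fun x => 1 / f x) y)) = fun y => -Real.log (f y) := by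
      funext y
      simp only [one_div, Real.log_inv]
    rw [hfun]
    exact (hf.log hne).neg
  · intro n hn x hx
    obtain ⟨m, rfl⟩ : ∃ m, n = m + 1 := ⟨n - 1, by omega⟩
    have hfun : (fun y => Real.log (1 / f y)) = fun y => -Real.log (f y) := by
      funext y
      rw [one_div, Real.log_inv]
    show 0 ≤ (-1:ℝ)^(m+1) * iteratedDeriv (m+1) (fun y => Real.log (1 / f y)) x
    rw [hfun, iteratedDeriv_fun_neg, ← itdW_eq_itd hIopen hx,
      iteratedDerivWithin_succ', ← hg_def, ← hv_def, pow_succ]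
    nlinarith [key m x hx]
end

section
/- Let f : (0,∞) → ℝ be continuous, completely monotonic, and suppose f maps (0,∞) into (0,1). Then ln f is super-additive: for all x,y > 0 one has ln f(x) + ln f(y) ≤ ln f(x+y), equivalently f(x)·f(y) ≤ f(x+y). -/
namespace CM15
open Set Filter Finset Topology

lemma iterWithin_eq_global {F : ℝ → ℝ} {U s : Set ℝ} (hU : IsOpen U)
    (hF : ContDiffOn ℝ (⊤:ℕ∞) F U) (hsub : s ⊆ U) (hs : UniqueDiffOn ℝ s) {x : ℝ} (hx : x ∈ s)
    (n : ℕ) : iteratedDerivWithin n F s x = iteratedDeriv n F x := by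
  have h1 : HasFTaylorSeriesUpToOn (⊤:ℕ∞) F (ftaylorSeriesWithin ℝ F U) U :=
    hF.ftaylorSeriesWithin hU.uniqueDiffOn
  have h2 := (h1.mono hsub).eq_iteratedFDerivWithin_of_uniqueDiffOn (m := n)
    (by exact_mod_cast le_top) hs hx
  have h3 : ftaylorSeriesWithin ℝ F U x n = iteratedFDerivWithin ℝ n F U x := rfl
  have h4 : iteratedFDerivWithin ℝ n F U x = iteratedFDeriv ℝ n F x :=
    iteratedFDerivWithin_of_isOpen n hU (hsub hx)
  rw [iteratedDerivWithin_eq_iteratedFDerivWithin, iteratedDeriv_eq_iteratedFDeriv, ← h2, h3, h4]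

lemma refl_iter (f : ℝ → ℝ) (b : ℝ) (n : ℕ) (t : ℝ) :
    iteratedDeriv n (fun z => f (b - z)) t = (-1 : ℝ)^n * iteratedDeriv n f (b - t) := by
  have h1 : (fun z => f (b - z)) = fun z => (fun w => f (b + w)) (-z) := by
    funext z; simp [sub_eq_add_neg]
  rw [h1, iteratedDeriv_comp_neg n (fun w => f (b + w)) t,
    congrFun (iteratedDeriv_comp_const_add n f b) (-t)]
  simp [smul_eq_mul, sub_eq_add_neg]


lemma cheby {n : ℕ} {w a c : ℕ → ℝ} (hw : ∀ i, 0 ≤ w i)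
    (ha : ∀ i j : ℕ, i ≤ j → a j ≤ a i) (hc : ∀ i j : ℕ, i ≤ j → c j ≤ c i) :
    (∑ i ∈ Finset.range n, w i * a i) * (∑ i ∈ Finset.range n, w i * c i)
      ≤ (∑ i ∈ Finset.range n, w i) * (∑ i ∈ Finset.range n, w i * (a i * c i)) := by
  have key : 0 ≤ ∑ i ∈ Finset.range n, ∑ j ∈ Finset.range n,
      w i * w j * ((a i - a j) * (c i - c j)) := by
    apply Finset.sum_nonneg; intro i _
    apply Finset.sum_nonneg; intro j _
    apply mul_nonneg (mul_nonneg (hw i) (hw j))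
    rcases le_total i j with h | h
    · have h1 := ha i j h; have h2 := hc i j h; nlinarith
    · have h1 := ha j i h; have h2 := hc j i h; nlinarith
  have h1 : ∀ i j : ℕ, w i * w j * ((a i - a j) * (c i - c j))
      = (w i * (a i * c i)) * w j - (w i * a i) * (w j * c j) - (w i * c i) * (w j * a j)
        + w i * (w j * (a j * c j)) := fun i j => by ring
  have expand : (∑ i ∈ Finset.range n, ∑ j ∈ Finset.range n,
        w i * w j * ((a i - a j) * (c i - c j)))
      = 2*((∑ i ∈ Finset.range n, w i) * (∑ i ∈ Finset.range n, w i * (a i * c i)))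
        - 2*((∑ i ∈ Finset.range n, w i * a i) * (∑ i ∈ Finset.range n, w i * c i)) := by
    simp only [h1, Finset.sum_add_distrib, Finset.sum_sub_distrib,
      ← Finset.sum_mul, ← Finset.mul_sum]
    ring
  rw [expand] at key
  linarith



variable {f : ℝ → ℝ}


lemma reflCD (hsm : ContDiffOn ℝ (⊤:ℕ∞) f (Ioi 0)) (b : ℝ) :
    ContDiffOn ℝ (⊤:ℕ∞) (fun t => f (b - t)) (Iio b) := by
  refine ContDiffOn.comp hsm ((contDiff_const.sub contDiff_id).contDiffOn) ?_
  intro t ht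
  simp only [Set.mem_Ioi, Set.mem_Iio] at *
  linarith

/-- key Taylor estimates packaged: for `0 < u < b` and any `n`, there is `ξ ∈ (u, b)` with
`f u - ∑_{k<n+1} gₖ(b)(b-u)^k/k! = g_{n+1}(ξ) (b-u)^{n+1}/(n+1)!` (Lagrange). -/
lemma taylor_lagrange (hsm : ContDiffOn ℝ (⊤:ℕ∞) f (Ioi 0))
    {b u : ℝ} (hu : 0 < u) (hub : u < b) (n : ℕ) :
    ∃ s ∈ Ioo u b,
      f u - (∑ k ∈ Finset.range (n+1), ((-1:ℝ)^k * iteratedDeriv k f b) * (b-u)^k / (Nat.factorial k))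
        = ((-1:ℝ)^(n+1) * iteratedDeriv (n+1) f s) * (b-u)^(n+1) / (Nat.factorial (n+1)) := by
  have hx : (0:ℝ) < b - u := by linarith
  set F : ℝ → ℝ := fun t => f (b - t) with hF
  have hFC : ContDiffOn ℝ (⊤:ℕ∞) F (Iio b) := reflCD hsm b
  have hsub : Icc (0:ℝ) (b-u) ⊆ Iio b := by
    intro t ht; simp only [Set.mem_Icc] at ht; simp only [Set.mem_Iio]; linarith
  have huni : UniqueDiffOn ℝ (Icc (0:ℝ) (b-u)) := uniqueDiffOn_Icc hx
  have hiter : ∀ m : ℕ, ∀ t ∈ Icc (0:ℝ) (b-u),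
      iteratedDerivWithin m F (Icc (0:ℝ) (b-u)) t = (-1:ℝ)^m * iteratedDeriv m f (b - t) := by
    intro m t ht
    rw [iterWithin_eq_global isOpen_Iio hFC hsub huni ht m, refl_iter]
  have hdiffG : ∀ m : ℕ, ∀ t ∈ Iio b, DifferentiableAt ℝ (iteratedDeriv m F) t := by
    intro m t ht
    have h1 : DifferentiableOn ℝ (iteratedDerivWithin m F (Iio b)) (Iio b) :=
      hFC.differentiableOn_iteratedDerivWithin (by exact_mod_cast WithTop.coe_lt_top m)
        isOpen_Iio.uniqueDiffOn
    have heq : EqOn (iteratedDerivWithin m F (Iio b)) (iteratedDeriv m F) (Iio b) :=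
      fun z hz => iterWithin_eq_global isOpen_Iio hFC (subset_refl _)
        isOpen_Iio.uniqueDiffOn hz m
    exact ((h1 t ht).congr (fun z hz => (heq hz).symm) (heq ht).symm).differentiableAt
      (isOpen_Iio.mem_nhds ht)
  have hf : ContDiffOn ℝ n F (Icc 0 (b-u)) := (hFC.mono hsub).of_le (by exact_mod_cast le_top)
  have hdiff : DifferentiableOn ℝ (iteratedDerivWithin n F (Icc 0 (b-u))) (Ioo 0 (b-u)) := by
    intro t ht
    have htI : t ∈ Icc (0:ℝ) (b-u) := Ioo_subset_Icc_self ht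
    have heq : ∀ z ∈ Ioo (0:ℝ) (b-u), iteratedDerivWithin n F (Icc 0 (b-u)) z = iteratedDeriv n F z :=
      fun z hz => iterWithin_eq_global isOpen_Iio hFC hsub huni (Ioo_subset_Icc_self hz) n
    exact ((hdiffG n t (hsub htI)).differentiableWithinAt).congr heq (heq t ht)
  obtain ⟨ξ, hξ, hTay⟩ := taylor_mean_remainder_lagrange hx.ne (by rwa [Set.uIcc_of_le hx.le])
    (by rwa [Set.uIcc_of_le hx.le, Set.uIoo_of_le hx.le])
  rw [Set.uIoo_of_le hx.le] at hξ
  rw [Set.uIcc_of_le hx.le] at hTay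
  refine ⟨b - ξ, ⟨by simp only [Set.mem_Ioo] at hξ; linarith, by simp only [Set.mem_Ioo] at hξ; linarith⟩, ?_⟩
  have hξI : ξ ∈ Icc (0:ℝ) (b-u) := Ioo_subset_Icc_self hξ
  have e1 : F (b - u) = f u := by simp [hF]
  have e2 : iteratedDerivWithin (n+1) F (Icc 0 (b-u)) ξ = (-1:ℝ)^(n+1) * iteratedDeriv (n+1) f (b - ξ) :=
    hiter (n+1) ξ hξI
  have e3 : taylorWithinEval F n (Icc 0 (b-u)) 0 (b-u)
      = ∑ k ∈ Finset.range (n+1), ((-1:ℝ)^k * iteratedDeriv k f b) * (b-u)^k / (Nat.factorial k) := by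
    rw [taylor_within_apply]
    refine Finset.sum_congr rfl ?_
    intro k hk
    rw [hiter k 0 (by constructor <;> linarith)]
    simp only [sub_zero, smul_eq_mul]
    ring
  rw [e1, e3, sub_zero] at hTay
  rw [hTay, e2]


lemma taylor_cauchy (hsm : ContDiffOn ℝ (⊤:ℕ∞) f (Ioi 0))
    {b u : ℝ} (hu : 0 < u) (hub : u < b) (n : ℕ) :
    ∃ s ∈ Ioo u b,
      f u - (∑ k ∈ Finset.range (n+1), ((-1:ℝ)^k * iteratedDeriv k f b) * (b-u)^k / (Nat.factorial k))
        = ((-1:ℝ)^(n+1) * iteratedDeriv (n+1) f s) * (s-u)^n / (Nat.factorial n) * (b-u) := by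
  have hx : (0:ℝ) < b - u := by linarith
  set F : ℝ → ℝ := fun t => f (b - t) with hF
  have hFC : ContDiffOn ℝ (⊤:ℕ∞) F (Iio b) := reflCD hsm b
  have hsub : Icc (0:ℝ) (b-u) ⊆ Iio b := by
    intro t ht; simp only [Set.mem_Icc] at ht; simp only [Set.mem_Iio]; linarith
  have huni : UniqueDiffOn ℝ (Icc (0:ℝ) (b-u)) := uniqueDiffOn_Icc hx
  have hiter : ∀ m : ℕ, ∀ t ∈ Icc (0:ℝ) (b-u),
      iteratedDerivWithin m F (Icc (0:ℝ) (b-u)) t = (-1:ℝ)^m * iteratedDeriv m f (b - t) := by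
    intro m t ht
    rw [iterWithin_eq_global isOpen_Iio hFC hsub huni ht m, refl_iter]
  have hdiffG : ∀ m : ℕ, ∀ t ∈ Iio b, DifferentiableAt ℝ (iteratedDeriv m F) t := by
    intro m t ht
    have h1 : DifferentiableOn ℝ (iteratedDerivWithin m F (Iio b)) (Iio b) :=
      hFC.differentiableOn_iteratedDerivWithin (by exact_mod_cast WithTop.coe_lt_top m)
        isOpen_Iio.uniqueDiffOn
    have heq : EqOn (iteratedDerivWithin m F (Iio b)) (iteratedDeriv m F) (Iio b) :=
      fun z hz => iterWithin_eq_global isOpen_Iio hFC (subset_refl _)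
        isOpen_Iio.uniqueDiffOn hz m
    exact ((h1 t ht).congr (fun z hz => (heq hz).symm) (heq ht).symm).differentiableAt
      (isOpen_Iio.mem_nhds ht)
  have hf : ContDiffOn ℝ n F (Icc 0 (b-u)) := (hFC.mono hsub).of_le (by exact_mod_cast le_top)
  have hdiff : DifferentiableOn ℝ (iteratedDerivWithin n F (Icc 0 (b-u))) (Ioo 0 (b-u)) := by
    intro t ht
    have htI : t ∈ Icc (0:ℝ) (b-u) := Ioo_subset_Icc_self ht
    have heq : ∀ z ∈ Ioo (0:ℝ) (b-u), iteratedDerivWithin n F (Icc 0 (b-u)) z = iteratedDeriv n F z :=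
      fun z hz => iterWithin_eq_global isOpen_Iio hFC hsub huni (Ioo_subset_Icc_self hz) n
    exact ((hdiffG n t (hsub htI)).differentiableWithinAt).congr heq (heq t ht)
  obtain ⟨ξ, hξ, hTay⟩ := taylor_mean_remainder_cauchy hx.ne (by rwa [Set.uIcc_of_le hx.le])
    (by rwa [Set.uIcc_of_le hx.le, Set.uIoo_of_le hx.le])
  rw [Set.uIoo_of_le hx.le] at hξ
  rw [Set.uIcc_of_le hx.le] at hTay
  refine ⟨b - ξ, ⟨by simp only [Set.mem_Ioo] at hξ; linarith, by simp only [Set.mem_Ioo] at hξ; linarith⟩, ?_⟩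
  have hξI : ξ ∈ Icc (0:ℝ) (b-u) := Ioo_subset_Icc_self hξ
  have e1 : F (b - u) = f u := by simp [hF]
  have e2 : iteratedDerivWithin (n+1) F (Icc 0 (b-u)) ξ = (-1:ℝ)^(n+1) * iteratedDeriv (n+1) f (b - ξ) :=
    hiter (n+1) ξ hξI
  have e3 : taylorWithinEval F n (Icc 0 (b-u)) 0 (b-u)
      = ∑ k ∈ Finset.range (n+1), ((-1:ℝ)^k * iteratedDeriv k f b) * (b-u)^k / (Nat.factorial k) := by
    rw [taylor_within_apply]
    refine Finset.sum_congr rfl ?_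
    intro k hk
    rw [hiter k 0 (by constructor <;> linarith)]
    simp only [sub_zero, smul_eq_mul]
    ring
  rw [e1, e3, sub_zero] at hTay
  rw [hTay, e2]
  have hring : b - u - ξ = b - ξ - u := by ring
  rw [hring]


section estimates
variable (hsm : ContDiffOn ℝ (⊤:ℕ∞) f (Ioi 0))
  (hg : ∀ n : ℕ, ∀ x : ℝ, 0 < x → 0 ≤ (-1:ℝ)^n * iteratedDeriv n f x)

include hsm hg

lemma term_nonneg {b u : ℝ} (hb : 0 < b) (hub : u ≤ b) (k : ℕ) :
    0 ≤ ((-1:ℝ)^k * iteratedDeriv k f b) * (b-u)^k / (Nat.factorial k) := by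
  apply div_nonneg _ (by positivity)
  exact mul_nonneg (hg k b hb) (pow_nonneg (by linarith) k)

lemma sum_le {b u : ℝ} (hu : 0 < u) (hub : u < b) (n : ℕ) :
    (∑ k ∈ Finset.range n, ((-1:ℝ)^k * iteratedDeriv k f b) * (b-u)^k / (Nat.factorial k)) ≤ f u := by
  cases n with
  | zero => simpa using hg 0 u hu
  | succ m =>
    obtain ⟨s, hs, heq⟩ := taylor_lagrange hsm hu hub m
    have h0 : 0 < s := lt_trans hu hs.1
    have hrem : 0 ≤ ((-1:ℝ)^(m+1) * iteratedDeriv (m+1) f s) * (b-u)^(m+1) / (Nat.factorial (m+1)) := by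
      apply div_nonneg _ (by positivity)
      exact mul_nonneg (hg (m+1) s h0) (pow_nonneg (by linarith) (m+1))
    linarith [heq ▸ hrem]

lemma single_le {b u : ℝ} (hu : 0 < u) (hub : u < b) (k : ℕ) :
    ((-1:ℝ)^k * iteratedDeriv k f b) * (b-u)^k / (Nat.factorial k) ≤ f u := by
  refine le_trans ?_ (sum_le hsm hg hu hub (k+1))
  refine Finset.single_le_sum (f := fun j => ((-1:ℝ)^j * iteratedDeriv j f b) * (b-u)^j / (Nat.factorial j)) ?_ (Finset.self_mem_range_succ k)
  intro j _
  exact term_nonneg hsm hg (lt_trans hu hub) (le_of_lt hub) j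

lemma remainder_le (hle1 : ∀ x : ℝ, 0 < x → f x ≤ 1)
    {b u : ℝ} (hu : 0 < u) (hub : u < b) (n : ℕ) :
    f u - (∑ k ∈ Finset.range (n+1), ((-1:ℝ)^k * iteratedDeriv k f b) * (b-u)^k / (Nat.factorial k))
      ≤ (n+1) * (2*(b-u)/u) * ((b-u)/(b-u/2))^n := by
  obtain ⟨s, hs, heq⟩ := taylor_cauchy hsm hu hub n
  rw [heq]
  set G : ℝ := (-1:ℝ)^(n+1) * iteratedDeriv (n+1) f s with hGdef
  have hs0 : 0 < s := lt_trans hu hs.1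
  have hGn : 0 ≤ G := hg (n+1) s hs0
  have hu2 : 0 < u/2 := by linarith
  have hu2s : u/2 < s := by linarith [hs.1]
  have hB : 0 < s - u/2 := by linarith
  have hA : 0 ≤ s - u := le_of_lt (by linarith [hs.1])
  have hC : 0 < b - u := by linarith
  have hD : 0 < b - u/2 := by linarith
  -- single-term bound at base s, eval u/2
  have h1 : G * (s-u/2)^(n+1) / (Nat.factorial (n+1)) ≤ 1 :=
    le_trans (single_le hsm hg hu2 hu2s (n+1)) (hle1 (u/2) hu2)
  have hGle : G ≤ (Nat.factorial (n+1)) / (s-u/2)^(n+1) := by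
    rw [div_le_one (by positivity)] at h1
    rw [le_div_iff₀ (by positivity)]
    linarith
  have fact_pos : (0:ℝ) < Nat.factorial n := by positivity
  have hratio : (s-u)/(s-u/2) ≤ (b-u)/(b-u/2) := by
    rw [div_le_div_iff₀ hB hD]
    nlinarith [hs.2]
  have hinv : (1:ℝ)/(s-u/2) ≤ 2/u := by
    rw [div_le_div_iff₀ hB hu]
    linarith [hs.1]
  have hGle' : G ≤ ((n:ℝ)+1) * (Nat.factorial n) / (s-u/2)^(n+1) := by
    have : ((Nat.factorial (n+1) : ℝ)) = ((n:ℝ)+1) * (Nat.factorial n) := by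
      rw [Nat.factorial_succ]; push_cast; ring
    rw [← this]; exact hGle
  have h2 : ((s-u/2):ℝ)^n ≠ 0 := pow_ne_zero n (ne_of_gt hB)
  have h3 : ((Nat.factorial n : ℝ)) ≠ 0 := ne_of_gt fact_pos
  calc G * (s-u)^n / (Nat.factorial n) * (b-u)
      ≤ (((n:ℝ)+1) * (Nat.factorial n) / (s-u/2)^(n+1)) * (s-u)^n / (Nat.factorial n) * (b-u) := by
        gcongr
    _ = (((n:ℝ)+1) * (s-u)^n * (b-u) * (((s-u/2)^n)⁻¹ * (s-u/2)⁻¹)) * ((Nat.factorial n:ℝ) * ((Nat.factorial n:ℝ))⁻¹) := by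
        rw [pow_succ]
        simp only [div_eq_mul_inv, mul_inv]
        ring
    _ = ((n:ℝ)+1) * (b-u) * (((s-u)/(s-u/2))^n * (1/(s-u/2))) := by
        rw [mul_inv_cancel₀ h3, mul_one, div_pow]
        simp only [div_eq_mul_inv, mul_inv, one_mul]
        ring
    _ ≤ ((n:ℝ)+1) * (b-u) * (((b-u)/(b-u/2))^n * (2/u)) := by
        refine mul_le_mul_of_nonneg_left ?_ (mul_nonneg (by positivity) hC.le)
        exact mul_le_mul (pow_le_pow_left₀ (div_nonneg hA hB.le) hratio n) hinv
          (one_div_nonneg.mpr hB.le) (pow_nonneg (div_nonneg hC.le hD.le) n)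
    _ = (n+1) * (2*(b-u)/u) * ((b-u)/(b-u/2))^n := by push_cast; ring

end estimates

section hs2
variable (hsm : ContDiffOn ℝ (⊤:ℕ∞) f (Ioi 0))
  (hg : ∀ n : ℕ, ∀ x : ℝ, 0 < x → 0 ≤ (-1:ℝ)^n * iteratedDeriv n f x)
  (hle1 : ∀ x : ℝ, 0 < x → f x ≤ 1)
include hsm hg hle1

lemma hasSum_expansion {b u : ℝ} (hu : 0 < u) (hub : u < b) :
    HasSum (fun k => ((-1:ℝ)^k * iteratedDeriv k f b) * (b-u)^k / (Nat.factorial k)) (f u) := by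
  set t : ℕ → ℝ := fun k => ((-1:ℝ)^k * iteratedDeriv k f b) * (b-u)^k / (Nat.factorial k) with ht
  have htn : ∀ k, 0 ≤ t k := term_nonneg hsm hg (lt_trans hu hub) hub.le
  rw [hasSum_iff_tendsto_nat_of_nonneg htn]
  have hρ0 : (0:ℝ) ≤ (b-u)/(b-u/2) := div_nonneg (by linarith) (by linarith)
  have hρ : ‖(b-u)/(b-u/2)‖ < 1 := by
    rw [Real.norm_eq_abs, abs_of_nonneg hρ0]
    rw [div_lt_one (by linarith)]
    linarith
  have t1 : Tendsto (fun n : ℕ => (n:ℝ) * ((b-u)/(b-u/2))^n) atTop (𝓝 0) := by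
    simpa using (summable_pow_mul_geometric_of_norm_lt_one 1 hρ).tendsto_atTop_zero
  have t2 : Tendsto (fun n : ℕ => ((b-u)/(b-u/2))^n) atTop (𝓝 0) :=
    tendsto_pow_atTop_nhds_zero_of_norm_lt_one hρ
  have t3 : Tendsto (fun n : ℕ => f u - ((n:ℝ)+1) * (2*(b-u)/u) * ((b-u)/(b-u/2))^n)
      atTop (𝓝 (f u)) := by
    have t4 : Tendsto (fun n : ℕ => ((n:ℝ)+1) * (2*(b-u)/u) * ((b-u)/(b-u/2))^n)
        atTop (𝓝 0) := by
      have h := (t1.add t2).const_mul (2*(b-u)/u)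
      simp only [mul_zero, add_zero] at h
      exact h.congr (fun n => by ring)
    simpa using tendsto_const_nhds.sub t4
  have hsq : Tendsto (fun n : ℕ => ∑ k ∈ Finset.range (n+1), t k) atTop (𝓝 (f u)) := by
    refine tendsto_of_tendsto_of_tendsto_of_le_of_le t3 tendsto_const_nhds ?_ ?_
    · intro n
      have := remainder_le hsm hg hle1 hu hub n
      push_cast at this ⊢
      linarith
    · intro n
      exact sum_le hsm hg hu hub (n+1)
  exact (tendsto_add_atTop_iff_nat 1).mp hsq


lemma key_ineq {x y bb : ℝ} (hx : 0 < x) (hy : 0 < y) (hb : x + y < bb) :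
    f x * f y ≤ f (x + y - x*y/bb) := by
  have hbb : 0 < bb := lt_trans (by linarith) hb
  have hxb : x < bb := by linarith
  have hyb : y < bb := by linarith
  set z : ℝ := x + y - x*y/bb with hz
  have hz0 : 0 < z := by
    have h1 : x*y/bb < y := by
      rw [div_lt_iff₀ hbb]
      nlinarith
    simp only [hz]; linarith
  have hzb : z < bb := by
    have h1 : 0 < x*y/bb := by positivity
    simp only [hz]; linarith
  -- weights and ratio sequences
  set w : ℕ → ℝ := fun k => ((-1:ℝ)^k * iteratedDeriv k f bb) * bb^k / (Nat.factorial k) with hw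
  set a : ℕ → ℝ := fun k => ((bb-x)/bb)^k with ha
  set c : ℕ → ℝ := fun k => ((bb-y)/bb)^k with hc
  have hbbne : bb ≠ 0 := ne_of_gt hbb
  have hwa : ∀ k, w k * a k = ((-1:ℝ)^k * iteratedDeriv k f bb) * (bb-x)^k / (Nat.factorial k) := by
    intro k
    simp only [hw, ha]
    rw [div_mul_eq_mul_div, mul_assoc, ← mul_pow, mul_div_cancel₀ _ hbbne]
  have hwc : ∀ k, w k * c k = ((-1:ℝ)^k * iteratedDeriv k f bb) * (bb-y)^k / (Nat.factorial k) := by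
    intro k
    simp only [hw, hc]
    rw [div_mul_eq_mul_div, mul_assoc, ← mul_pow, mul_div_cancel₀ _ hbbne]
  have hbz : bb - z = (bb-x)*(bb-y)/bb := by
    rw [hz]; field_simp; ring
  have hac : ∀ k, a k * c k = ((bb-z)/bb)^k := by
    intro k
    simp only [ha, hc]
    rw [← mul_pow, div_mul_div_comm, hbz, div_div]
  have hwac : ∀ k, w k * (a k * c k) = ((-1:ℝ)^k * iteratedDeriv k f bb) * (bb-z)^k / (Nat.factorial k) := by
    intro k
    rw [hac]
    simp only [hw]
    rw [div_mul_eq_mul_div, mul_assoc, ← mul_pow, mul_div_cancel₀ _ hbbne]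
  have hwn : ∀ k, 0 ≤ w k := by
    intro k
    have := term_nonneg hsm hg (u := 0) hbb (le_of_lt hbb) k
    simpa using this
  -- sum of weights ≤ 1
  have hW : ∀ n : ℕ, (∑ k ∈ Finset.range n, w k) ≤ 1 := by
    intro n
    have htd : Tendsto (fun u : ℝ => ∑ k ∈ Finset.range n, ((-1:ℝ)^k * iteratedDeriv k f bb) * (bb-u)^k / (Nat.factorial k))
        (𝓝[>] (0:ℝ)) (𝓝 (∑ k ∈ Finset.range n, w k)) := by
      have hcont2 : Continuous (fun u : ℝ => ∑ k ∈ Finset.range n, ((-1:ℝ)^k * iteratedDeriv k f bb) * (bb-u)^k / (Nat.factorial k)) := by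
        apply continuous_finset_sum
        intro k _
        exact (continuous_const.mul ((continuous_const.sub continuous_id).pow k)).div_const _
      have h0 : (fun u : ℝ => ∑ k ∈ Finset.range n, ((-1:ℝ)^k * iteratedDeriv k f bb) * (bb-u)^k / (Nat.factorial k)) 0
          = ∑ k ∈ Finset.range n, w k := by
        simp [hw]
      rw [← h0]
      exact (hcont2.tendsto 0).mono_left nhdsWithin_le_nhds
    refine le_of_tendsto htd ?_
    filter_upwards [Ioo_mem_nhdsGT_of_mem (Set.mem_Ico.mpr ⟨le_refl (0:ℝ), hbb⟩)] with u hu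
    exact le_trans (sum_le hsm hg hu.1 hu.2 n) (hle1 u hu.1)
  -- partial-sum product bound
  have hkey : ∀ n : ℕ, (∑ k ∈ Finset.range n, w k * a k) * (∑ k ∈ Finset.range n, w k * c k)
      ≤ f z := by
    intro n
    have h1 := cheby (n := n) (w := w) (a := a) (c := c) hwn
      (fun i j hij => by
        simp only [ha]
        exact pow_le_pow_of_le_one (div_nonneg (by linarith) hbb.le)
          (by rw [div_le_one hbb]; linarith) hij)
      (fun i j hij => by
        simp only [hc]
        exact pow_le_pow_of_le_one (div_nonneg (by linarith) hbb.le)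
          (by rw [div_le_one hbb]; linarith) hij)
    have h2 : (∑ k ∈ Finset.range n, w k * (a k * c k)) ≤ f z := by
      calc (∑ k ∈ Finset.range n, w k * (a k * c k))
          = ∑ k ∈ Finset.range n, ((-1:ℝ)^k * iteratedDeriv k f bb) * (bb-z)^k / (Nat.factorial k) :=
            Finset.sum_congr rfl (fun k _ => hwac k)
        _ ≤ f z := sum_le hsm hg hz0 hzb n
    have h3 : 0 ≤ (∑ k ∈ Finset.range n, w k * (a k * c k)) := by
      apply Finset.sum_nonneg
      intro k _
      exact mul_nonneg (hwn k) (mul_nonneg (pow_nonneg (div_nonneg (by linarith) hbb.le) k)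
        (pow_nonneg (div_nonneg (by linarith) hbb.le) k))
    calc (∑ k ∈ Finset.range n, w k * a k) * (∑ k ∈ Finset.range n, w k * c k)
        ≤ (∑ k ∈ Finset.range n, w k) * (∑ k ∈ Finset.range n, w k * (a k * c k)) := h1
      _ ≤ 1 * (∑ k ∈ Finset.range n, w k * (a k * c k)) :=
          mul_le_mul_of_nonneg_right (hW n) h3
      _ = (∑ k ∈ Finset.range n, w k * (a k * c k)) := one_mul _
      _ ≤ f z := h2
  -- limits
  have hs1 : HasSum (fun k => w k * a k) (f x) := by
    rw [funext hwa]
    exact hasSum_expansion hsm hg hle1 hx hxb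
  have hs2 : HasSum (fun k => w k * c k) (f y) := by
    rw [funext hwc]
    exact hasSum_expansion hsm hg hle1 hy hyb
  have hT : Tendsto (fun n : ℕ => (∑ k ∈ Finset.range n, w k * a k)
      * (∑ k ∈ Finset.range n, w k * c k)) atTop (𝓝 (f x * f y)) :=
    hs1.tendsto_sum_nat.mul hs2.tendsto_sum_nat
  exact le_of_tendsto hT (Eventually.of_forall hkey)

end hs2
end CM15

theorem stmt15 (f : ℝ → ℝ) (hcont : ContinuousOn f (Set.Ioi 0))
    (hcm : CompletelyMonotonicOn f (Set.Ioi 0))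
    (hmaps : ∀ x : ℝ, 0 < x → f x ∈ Set.Ioo (0 : ℝ) 1) :
    ∀ x y : ℝ, 0 < x → 0 < y →
      Real.log (f x) + Real.log (f y) ≤ Real.log (f (x + y)) ∧
      f x * f y ≤ f (x + y) := by
  intro x y hx hy
  open Set Filter Topology in
  have hsm : ContDiffOn ℝ (⊤:ℕ∞) f (Set.Ioi 0) := hcm.1.of_le (by simp)
  have hg : ∀ n : ℕ, ∀ x : ℝ, 0 < x → 0 ≤ (-1:ℝ)^n * iteratedDeriv n f x :=
    fun n x hx => hcm.2 n x (Set.mem_Ioi.mpr hx)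
  have hle1 : ∀ x : ℝ, 0 < x → f x ≤ 1 := fun x hx => (hmaps x hx).2.le
  have hfinal : f x * f y ≤ f (x + y) := by
    have l1 : Filter.Tendsto (fun bb : ℝ => x + y - x*y/bb) Filter.atTop (𝓝 (x+y)) := by
      have h2 : Filter.Tendsto (fun bb : ℝ => x*y/bb) Filter.atTop (𝓝 0) :=
        tendsto_const_nhds.div_atTop tendsto_id
      simpa using tendsto_const_nhds.sub h2
    have l2 : ∀ᶠ bb in Filter.atTop, f x * f y ≤ f (x + y - x*y/bb) := by
      filter_upwards [Filter.eventually_gt_atTop (x+y)] with bb hbb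
      exact CM15.key_ineq hsm hg hle1 hx hy hbb
    have l3 : Filter.Tendsto (fun bb : ℝ => f (x + y - x*y/bb)) Filter.atTop (𝓝 (f (x+y))) := by
      have hcw : ContinuousWithinAt f (Set.Ioi 0) (x+y) :=
        hcont (x+y) (Set.mem_Ioi.mpr (by linarith))
      apply hcw.tendsto.comp
      rw [tendsto_nhdsWithin_iff]
      refine ⟨l1, ?_⟩
      filter_upwards [Filter.eventually_gt_atTop (x+y)] with bb hbb
      have hbb0 : (0:ℝ) < bb := lt_trans (by linarith) hbb
      have hlt : x*y/bb < y := by rw [div_lt_iff₀ hbb0]; nlinarith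
      simp only [Set.mem_Ioi]; linarith
    exact ge_of_tendsto l3 l2
  refine ⟨?_, hfinal⟩
  have hfx := hmaps x hx
  have hfy := hmaps y hy
  have hprod : 0 < f x * f y := mul_pos hfx.1 hfy.1
  calc Real.log (f x) + Real.log (f y) = Real.log (f x * f y) :=
        (Real.log_mul (ne_of_gt hfx.1) (ne_of_gt hfy.1)).symm
    _ ≤ Real.log (f (x + y)) := Real.log_le_log hprod hfinal
end
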